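/- arXiv:1010.2865 — 5 statements merged into one kernel-verified Lean document; each statement's English description precedes it below -/
import Mathlib

section
/- Fix u = (v,w) ∈ ℝ^m × Ker A^D. Define f̃ : {x ∈ ℝ^m : |x| < 1} → ℝ^m by f̃(x,w) = (1 − |x|²)² f(x/(1 − |x|²), w). Then the autonomous system dx/ds = (1 + R(s)²) f̃(x,w) − 2 (x · f̃(x,w)) x, where R(s) = |x(s)|, with initial condition x(0) = 2v/(1 + sqrt(1 + 4|v|²)), admits a solution defined for all s ≥ 0 that satisfies R(s) < 1 for every finite s, and the blow-up time of the Riccati system satisfies T*(u) = ∫_0^∞ (1 − R(s)⁴) ds. -/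
open Filter Topology MeasureTheory

noncomputable section

/-- `g_i(w) = (1/2) wᵀ π_i w + (A^C w)_i`. -/
def gfun {m n : ℕ} (π : Fin m → Matrix (Fin n) (Fin n) ℝ)
    (AC : Matrix (Fin m) (Fin n) ℝ) (w : Fin n → ℝ) (i : Fin m) : ℝ :=
  (1 / 2) * (∑ j, ∑ k, w j * π i j k * w k) + ∑ j, AC i j * w j

/-- `f_i(v,w) = (1/2) v_i² 1_{i∈I} + Σ_{k ≤ i} A^V_{ik} v_k + g_i(w)`. -/
def fRic {m n : ℕ} (I : Finset (Fin m)) (AV : Matrix (Fin m) (Fin m) ℝ)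
    (π : Fin m → Matrix (Fin n) (Fin n) ℝ) (AC : Matrix (Fin m) (Fin n) ℝ)
    (v : Fin m → ℝ) (w : Fin n → ℝ) (i : Fin m) : ℝ :=
  (1 / 2) * (v i) ^ 2 * (if i ∈ I then 1 else 0)
    + (∑ k ∈ Finset.univ.filter (fun k => k ≤ i), AV i k * v k)
    + gfun π AC w i

/-- `E(w) = {v : f_i(v,w) ≤ 0 ∀ i}`. -/
def Eset {m n : ℕ} (I : Finset (Fin m)) (AV : Matrix (Fin m) (Fin m) ℝ)
    (π : Fin m → Matrix (Fin n) (Fin n) ℝ) (AC : Matrix (Fin m) (Fin n) ℝ)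
    (w : Fin n → ℝ) : Set (Fin m → ℝ) :=
  {v | ∀ i, fRic I AV π AC v w i ≤ 0}

/-- `E°(w) = {v : f_i(v,w) < 0 ∀ i}`. -/
def EsetO {m n : ℕ} (I : Finset (Fin m)) (AV : Matrix (Fin m) (Fin m) ℝ)
    (π : Fin m → Matrix (Fin n) (Fin n) ℝ) (AC : Matrix (Fin m) (Fin n) ℝ)
    (w : Fin n → ℝ) : Set (Fin m → ℝ) :=
  {v | ∀ i, fRic I AV π AC v w i < 0}

/-- `𝔇 = {w ∈ Ker A^D : E(w) ≠ ∅}`. -/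
def Dset {m n : ℕ} (I : Finset (Fin m)) (AV : Matrix (Fin m) (Fin m) ℝ)
    (π : Fin m → Matrix (Fin n) (Fin n) ℝ) (AC : Matrix (Fin m) (Fin n) ℝ)
    (AD : Matrix (Fin n) (Fin n) ℝ) : Set (Fin n → ℝ) :=
  {w | AD.mulVec w = 0 ∧ (Eset I AV π AC w).Nonempty}

/-- `𝔇° = {w ∈ Ker A^D : E°(w) ≠ ∅}`. -/
def DsetO {m n : ℕ} (I : Finset (Fin m)) (AV : Matrix (Fin m) (Fin m) ℝ)
    (π : Fin m → Matrix (Fin n) (Fin n) ℝ) (AC : Matrix (Fin m) (Fin n) ℝ)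
    (AD : Matrix (Fin n) (Fin n) ℝ) : Set (Fin n → ℝ) :=
  {w | AD.mulVec w = 0 ∧ (EsetO I AV π AC w).Nonempty}
open scoped ENNReal

/-- `y` solves `ẏ = F(y)` on `[0,T)`. -/
def SolOn {d : ℕ} (F : (Fin d → ℝ) → (Fin d → ℝ)) (y : ℝ → Fin d → ℝ) (T : ℝ≥0∞) : Prop :=
  ∀ t : ℝ, 0 ≤ t → ENNReal.ofReal t < T → HasDerivAt y (F (y t)) t

/-- `y` is a maximal solution of `ẏ = F(y)`, with lifetime `T`: it is a solution on `[0,T)`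
and no solution with the same initial value exists on a longer interval. -/
def IsMaxSol {d : ℕ} (F : (Fin d → ℝ) → (Fin d → ℝ)) (y : ℝ → Fin d → ℝ) (T : ℝ≥0∞) : Prop :=
  0 < T ∧ SolOn F y T ∧
    ∀ (z : ℝ → Fin d → ℝ) (T' : ℝ≥0∞), T < T' → SolOn F z T' → z 0 ≠ y 0

/-- Lyapunov stability of an equilibrium point. -/
def StablePt {d : ℕ} (F : (Fin d → ℝ) → (Fin d → ℝ)) (ν : Fin d → ℝ) : Prop :=
  ∀ ε : ℝ, 0 < ε → ∃ δ : ℝ, 0 < δ ∧ ∀ (y : ℝ → Fin d → ℝ) (T : ℝ≥0∞),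
    IsMaxSol F y T → ‖y 0 - ν‖ < δ →
      ∀ t : ℝ, 0 < t → ENNReal.ofReal t < T → ‖y t - ν‖ < ε

/-- Asymptotic stability of an equilibrium point. -/
def AsympStablePt {d : ℕ} (F : (Fin d → ℝ) → (Fin d → ℝ)) (ν : Fin d → ℝ) : Prop :=
  StablePt F ν ∧ ∃ δ : ℝ, 0 < δ ∧ ∀ (y : ℝ → Fin d → ℝ) (T : ℝ≥0∞),
    IsMaxSol F y T → ‖y 0 - ν‖ < δ → T = ⊤ ∧ Filter.Tendsto y Filter.atTop (nhds ν)

/-- The compactified vector field `f̃(x,w) = (1 − |x|²)² f(x/(1 − |x|²), w)` (Euclidean norm). -/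
def ftilde {m n : ℕ} (I : Finset (Fin m)) (AV : Matrix (Fin m) (Fin m) ℝ)
    (π : Fin m → Matrix (Fin n) (Fin n) ℝ) (AC : Matrix (Fin m) (Fin n) ℝ)
    (w : Fin n → ℝ) (q : Fin m → ℝ) (i : Fin m) : ℝ :=
  (1 - ∑ j, (q j) ^ 2) ^ 2 *
    fRic I AV π AC (fun j => q j / (1 - ∑ j', (q j') ^ 2)) w i

/-!
The map `q ↦ 2q / (1 + √(1 + 4|q|²))` is a diffeomorphism of `ℝ^m` onto the open unit ball,
inverse to `x ↦ x / (1 - |x|²)`. Pushing the Riccati flow forward by it and reading it in the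
new time `s` with `dt/ds = timeScale(y)⁻¹ = 1 - |x|⁴` gives the compactified system. Since `f`
grows quadratically while `timeScale(y)` grows like `|y|`, `log (1 + 4|y|²)` grows at most
linearly in `s`; so if `s` stayed bounded on `[0, T*)`, then `T*` would be finite and `y`
bounded, and `y` could be continued past `T*` by Picard–Lindelöf. Hence `s` exhausts `[0, ∞)`
and `T* = ∫₀^∞ (dt/ds) ds = ∫₀^∞ (1 - R⁴) ds`.
-/

open Set

section Compactification

variable {m : ℕ}

def sqNorm (q : Fin m → ℝ) : ℝ := ∑ j, q j ^ 2

def compactRoot (q : Fin m → ℝ) : ℝ := √(1 + 4 * sqNorm q)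

/-- The inverse of `x ↦ x / (1 - |x|²)` on the open unit ball: solving `r / (1 - r²) = |q|`
for `r ∈ [0, 1)` gives `r = 2|q| / (1 + √(1 + 4|q|²))`. -/
def compactify (q : Fin m → ℝ) : Fin m → ℝ := fun i => 2 * q i / (1 + compactRoot q)

def timeScale (q : Fin m → ℝ) : ℝ := (1 + compactRoot q) ^ 2 / (4 * compactRoot q)

/-- The paper's `f̃`, i.e. `ftilde`, for an arbitrary field `F`. -/
def liftField (F : (Fin m → ℝ) → Fin m → ℝ) (p : Fin m → ℝ) : Fin m → ℝ :=
  fun i => (1 - sqNorm p) ^ 2 * F (fun j => p j / (1 - sqNorm p)) i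

def compactField (F : (Fin m → ℝ) → Fin m → ℝ) (p : Fin m → ℝ) : Fin m → ℝ :=
  fun i => (1 + sqNorm p) * liftField F p i - 2 * (∑ j, p j * liftField F p j) * p i

lemma sqNorm_nonneg (q : Fin m → ℝ) : 0 ≤ sqNorm q :=
  Finset.sum_nonneg fun j _ => sq_nonneg (q j)

lemma sq_le_sqNorm (q : Fin m → ℝ) (i : Fin m) : q i ^ 2 ≤ sqNorm q :=
  Finset.single_le_sum (fun j _ => sq_nonneg (q j)) (Finset.mem_univ i)

lemma norm_le_one_add_sqNorm (q : Fin m → ℝ) : ‖q‖ ≤ 1 + sqNorm q := by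
  refine (pi_norm_le_iff_of_nonneg (by linarith [sqNorm_nonneg q])).2 fun i => ?_
  rw [Real.norm_eq_abs]
  nlinarith [sq_le_sqNorm q i, sq_abs (q i), sq_nonneg (|q i| - 1)]

lemma compactRoot_sq (q : Fin m → ℝ) : compactRoot q ^ 2 = 1 + 4 * sqNorm q :=
  Real.sq_sqrt (by linarith [sqNorm_nonneg q])

lemma one_le_compactRoot (q : Fin m → ℝ) : 1 ≤ compactRoot q :=
  Real.one_le_sqrt.2 (by linarith [sqNorm_nonneg q])

lemma compactRoot_pos (q : Fin m → ℝ) : 0 < compactRoot q :=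
  one_pos.trans_le (one_le_compactRoot q)

lemma abs_le_compactRoot (q : Fin m → ℝ) (i : Fin m) : |q i| ≤ compactRoot q / 2 := by
  have := compactRoot_sq q
  nlinarith [sq_le_sqNorm q i, sq_abs (q i), abs_nonneg (q i), compactRoot_pos q]

lemma sqNorm_compactify (q : Fin m → ℝ) :
    sqNorm (compactify q) = 4 * sqNorm q / (1 + compactRoot q) ^ 2 := by
  simp only [sqNorm, compactify, div_pow, mul_pow, ← Finset.sum_div, ← Finset.mul_sum]
  norm_num

lemma one_sub_sqNorm_compactify (q : Fin m → ℝ) :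
    1 - sqNorm (compactify q) = 2 / (1 + compactRoot q) := by
  have := compactRoot_pos q
  rw [sqNorm_compactify]
  field_simp
  nlinarith [compactRoot_sq q]

lemma one_add_sqNorm_compactify (q : Fin m → ℝ) :
    1 + sqNorm (compactify q) = 2 * compactRoot q / (1 + compactRoot q) := by
  have := compactRoot_pos q
  rw [sqNorm_compactify]
  field_simp
  nlinarith [compactRoot_sq q]

lemma sqNorm_compactify_lt_one (q : Fin m → ℝ) : sqNorm (compactify q) < 1 := by
  have h := one_sub_sqNorm_compactify q
  have : 0 < 2 / (1 + compactRoot q) := by have := compactRoot_pos q; positivity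
  linarith

lemma one_sub_sqNorm_compactify_sq (q : Fin m → ℝ) :
    1 - sqNorm (compactify q) ^ 2 = (timeScale q)⁻¹ := by
  have := compactRoot_pos q
  rw [show 1 - sqNorm (compactify q) ^ 2
      = (1 - sqNorm (compactify q)) * (1 + sqNorm (compactify q)) by ring,
    one_sub_sqNorm_compactify, one_add_sqNorm_compactify, timeScale]
  field_simp
  ring

lemma one_le_timeScale (q : Fin m → ℝ) : 1 ≤ timeScale q := by
  have := compactRoot_pos q
  rw [timeScale, le_div_iff₀ (by positivity)]
  nlinarith [sq_nonneg (1 - compactRoot q)]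

lemma compactRoot_le_four_mul_timeScale (q : Fin m → ℝ) : compactRoot q ≤ 4 * timeScale q := by
  have := compactRoot_pos q
  rw [timeScale, mul_div_assoc', le_div_iff₀ (by positivity)]
  nlinarith

lemma continuous_timeScale : Continuous (timeScale : (Fin m → ℝ) → ℝ) := by
  have hroot : Continuous (compactRoot : (Fin m → ℝ) → ℝ) := by
    unfold compactRoot sqNorm; fun_prop
  exact (by fun_prop : Continuous fun q => (1 + compactRoot q) ^ 2).div (by fun_prop)
    fun q => (by have := compactRoot_pos q; positivity)

lemma compactify_div_one_sub_sqNorm (q : Fin m → ℝ) :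
    (fun j => compactify q j / (1 - sqNorm (compactify q))) = q := by
  have := compactRoot_pos q
  ext j
  rw [one_sub_sqNorm_compactify, compactify]
  field_simp

lemma liftField_compactify (F : (Fin m → ℝ) → Fin m → ℝ) (q : Fin m → ℝ) :
    liftField F (compactify q) = (2 / (1 + compactRoot q)) ^ 2 • F q := by
  ext i
  rw [liftField, compactify_div_one_sub_sqNorm, one_sub_sqNorm_compactify]
  rfl

end Compactification

section ChainRule

variable {m : ℕ} {c : ℝ → Fin m → ℝ} {c' : Fin m → ℝ} {t : ℝ}

lemma HasDerivAt.sqNorm (hc : HasDerivAt c c' t) :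
    HasDerivAt (fun u => sqNorm (c u)) (2 * ∑ j, c t j * c' j) t := by
  rw [Finset.mul_sum]
  exact HasDerivAt.fun_sum fun j _ =>
    ((hasDerivAt_pi.1 hc j).fun_pow 2).congr_deriv (by push_cast; ring)

lemma HasDerivAt.compactRoot (hc : HasDerivAt c c' t) :
    HasDerivAt (fun u => compactRoot (c u)) (4 * (∑ j, c t j * c' j) / compactRoot (c t)) t := by
  have h := ((hc.sqNorm.const_mul 4).const_add 1).sqrt (by linarith [sqNorm_nonneg (c t)])
  have h0 := compactRoot_pos (c t)
  refine h.congr_deriv ?_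
  change _ / (2 * _root_.compactRoot (c t)) = _
  field_simp

lemma compactField_compactify (F : (Fin m → ℝ) → Fin m → ℝ) (q : Fin m → ℝ) :
    compactField F (compactify q) = fun i =>
      8 * compactRoot q * F q i / (1 + compactRoot q) ^ 3
        - 32 * (∑ j, q j * F q j) * q i / (1 + compactRoot q) ^ 4 := by
  have := compactRoot_pos q
  ext i
  simp only [compactField, liftField_compactify, one_add_sqNorm_compactify, Pi.smul_apply,
    smul_eq_mul, compactify]
  rw [show ∑ j, 2 * q j / (1 + compactRoot q) * ((2 / (1 + compactRoot q)) ^ 2 * F q j)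
      = 8 / (1 + compactRoot q) ^ 3 * ∑ j, q j * F q j by
    rw [Finset.mul_sum]; exact Finset.sum_congr rfl fun j _ => by field_simp; ring]
  field_simp
  ring

lemma HasDerivAt.compactify {F : (Fin m → ℝ) → Fin m → ℝ}
    (hc : HasDerivAt c ((timeScale (c t))⁻¹ • F (c t)) t) :
    HasDerivAt (fun u => compactify (c u)) (compactField F (compactify (c t))) t := by
  have hS0 := compactRoot_pos (c t)
  have hsum : ∑ j, c t j * ((timeScale (c t))⁻¹ • F (c t)) j
      = (timeScale (c t))⁻¹ * ∑ j, c t j * F (c t) j := by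
    simp only [Pi.smul_apply, smul_eq_mul, Finset.mul_sum]
    exact Finset.sum_congr rfl fun j _ => by ring
  rw [compactField_compactify]
  refine hasDerivAt_pi.2 fun i => ?_
  refine (((hasDerivAt_pi.1 hc i).const_mul 2).fun_div (hc.compactRoot.const_add 1)
    (by linarith)).congr_deriv ?_
  rw [hsum]
  simp only [Pi.smul_apply, smul_eq_mul, timeScale, inv_div]
  field_simp
  ring

end ChainRule

section MaximalSolutions

open Metric

theorem LocallyLipschitz.exists_pos_forall_norm_le_exists_hasDerivAt {E : Type*}
    [NormedAddCommGroup E] [NormedSpace ℝ E] [ProperSpace E] {F : E → E}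
    (hF : LocallyLipschitz F) (R : ℝ) :
    ∃ ε > 0, ∀ x₀ : E, ‖x₀‖ ≤ R → ∀ t₀ : ℝ, ∃ α : ℝ → E, α t₀ = x₀ ∧
      ∀ t ∈ Ioo (t₀ - ε) (t₀ + ε), HasDerivAt α (F (α t)) t := by
  obtain ⟨K, hK⟩ := hF.locallyLipschitzOn.exists_lipschitzOnWith_of_compact
    (isCompact_closedBall (0 : E) (R + 1))
  obtain ⟨L, hL⟩ := (isCompact_closedBall (0 : E) (R + 1)).exists_bound_of_continuousOn
    hF.continuous.continuousOn
  set L' : NNReal := L.toNNReal + 1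
  have hL' : (0 : ℝ) < L' := by positivity
  refine ⟨1 / L', by positivity, fun x₀ hx₀ t₀ => ?_⟩
  have hball : closedBall x₀ 1 ⊆ closedBall 0 (R + 1) :=
    closedBall_subset_closedBall' (by rw [dist_zero_right]; linarith)
  have hpl : IsPicardLindelof (fun _ => F) (tmin := t₀ - 1 / L') (tmax := t₀ + 1 / L')
      ⟨t₀, by constructor <;> linarith [one_div_pos.2 hL']⟩ x₀ 1 0 L' K := by
    refine IsPicardLindelof.of_time_independent (fun x hx => ?_) (hK.mono (by simpa using hball)) ?_
    · have := hL x (hball (by simpa using hx))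
      simp only [L', NNReal.coe_add, NNReal.coe_one, Real.coe_toNNReal']
      linarith [le_max_left L 0]
    · simp [mul_inv_cancel₀ hL'.ne']
  obtain ⟨α, hα0, hα⟩ := hpl.exists_eq_forall_mem_Icc_hasDerivWithinAt₀
  exact ⟨α, hα0, fun t ht => (hα t (Ioo_subset_Icc_self ht)).hasDerivAt (Icc_mem_nhds ht.1 ht.2)⟩

variable {d : ℕ} {F : (Fin d → ℝ) → Fin d → ℝ} {y : ℝ → Fin d → ℝ}

lemma SolOn.piecewise {α : ℝ → Fin d → ℝ} {T : ℝ≥0∞} {t₀ t₁ : ℝ} (hy : SolOn F y T)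
    (ht₀ : ENNReal.ofReal t₀ < T) (hα : ∀ t, t₀ ≤ t → t < t₁ → HasDerivAt α (F (α t)) t)
    (heq : α t₀ = y t₀) :
    SolOn F (fun t => if t ≤ t₀ then y t else α t) (ENNReal.ofReal t₁) := by
  intro t ht htt
  dsimp only
  have ht₁ : t < t₁ := ((ENNReal.ofReal_lt_ofReal_iff').1 htt).1
  rcases lt_trichotomy t t₀ with h | rfl | h
  · have hyt := hy t ht ((ENNReal.ofReal_le_ofReal h.le).trans_lt ht₀)
    rw [if_pos h.le]
    exact hyt.congr_of_eventuallyEq <| Filter.mem_of_superset (Iic_mem_nhds h) fun u hu => if_pos hu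
  · have hleft : HasDerivWithinAt (fun t' => if t' ≤ t then y t' else α t') (F (y t)) (Iic t) t :=
      (hy t ht ht₀).hasDerivWithinAt.congr (fun u hu => if_pos hu) (if_pos le_rfl)
    have hright :
        HasDerivWithinAt (fun t' => if t' ≤ t then y t' else α t') (F (y t)) (Ici t) t := by
      rw [← heq]
      refine (hα t le_rfl ht₁).hasDerivWithinAt.congr (fun u hu => ?_) (by simp [heq])
      rcases (mem_Ici.1 hu).eq_or_lt with rfl | hlt
      · simp [heq]
      · simp [not_le.2 hlt]
    rw [if_pos le_rfl]
    simpa [Iic_union_Ici] using hleft.union hright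
  · rw [if_neg (not_le.2 h)]
    exact (hα t h.le ht₁).congr_of_eventuallyEq <|
      Filter.mem_of_superset (Ioi_mem_nhds h) fun u hu => if_neg (not_le.2 hu)

theorem IsMaxSol.exists_lt_norm (hF : LocallyLipschitz F) {T : ℝ}
    (hy : IsMaxSol F y (ENNReal.ofReal T)) (R : ℝ) : ∃ t, 0 ≤ t ∧ t < T ∧ R < ‖y t‖ := by
  by_contra! hR
  obtain ⟨ε, hε, hloc⟩ := hF.exists_pos_forall_norm_le_exists_hasDerivAt R
  have hT : 0 < T := ENNReal.ofReal_pos.1 hy.1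
  set t₀ := max 0 (T - ε / 2)
  have ht₀ : 0 ≤ t₀ := le_max_left _ _
  have ht₀T : t₀ < T := max_lt hT (by linarith)
  obtain ⟨α, hα0, hα⟩ := hloc (y t₀) (hR t₀ ht₀ ht₀T) t₀
  refine hy.2.2 _ (ENNReal.ofReal (t₀ + ε)) ?_
    (hy.2.1.piecewise ((ENNReal.ofReal_lt_ofReal_iff hT).2 ht₀T)
      (fun t h1 h2 => hα t ⟨by linarith, h2⟩) hα0) (if_pos ht₀)
  exact (ENNReal.ofReal_lt_ofReal_iff (by linarith)).2 (by linarith [le_max_right 0 (T - ε / 2)])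

end MaximalSolutions

section Clock

lemma sub_le_sub_of_one_le_hasDerivAt {f f' : ℝ → ℝ} {a b : ℝ} (hab : a ≤ b)
    (hf : ∀ x ∈ Icc a b, HasDerivAt f (f' x) x) (hf' : ∀ x ∈ Icc a b, 1 ≤ f' x) :
    b - a ≤ f b - f a := by
  have := (convex_Icc a b).mul_sub_le_image_sub_of_le_deriv (C := 1)
    (fun x hx => (hf x hx).continuousAt.continuousWithinAt)
    (fun x hx => (hf x (interior_subset hx)).differentiableAt.differentiableWithinAt)
    (fun x hx => (hf x (interior_subset hx)).deriv ▸ hf' x (interior_subset hx))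
    a ⟨le_rfl, hab⟩ b ⟨hab, le_rfl⟩ hab
  linarith

lemma hasDerivAt_integral_of_continuousOn {Ω : Set ℝ} {k : ℝ → ℝ} (hΩ : IsOpen Ω)
    (hΩc : Ω.OrdConnected) (h0 : 0 ∈ Ω) (hk : ContinuousOn k Ω) {t : ℝ} (ht : t ∈ Ω) :
    HasDerivAt (fun t => ∫ u in 0..t, k u) (k t) t :=
  intervalIntegral.integral_hasDerivAt_right (hk.mono (hΩc.uIcc_subset h0 ht)).intervalIntegrable
    (hk.stronglyMeasurableAtFilter hΩ t ht) (hk.continuousAt (hΩ.mem_nhds ht))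

lemma surjOn_of_one_le_hasDerivAt {Ω : Set ℝ} {σ k : ℝ → ℝ} (hΩc : Ω.OrdConnected)
    (hneg : Iic 0 ⊆ Ω) (hσ : ∀ t ∈ Ω, HasDerivAt σ (k t) t) (hk : ∀ t ∈ Ω, 1 ≤ k t)
    (hunb : ∀ M, ∃ t ∈ Ω, M ≤ σ t) : SurjOn σ Ω univ := by
  intro s _
  set a := min (s - σ 0) 0
  have ha : a ∈ Ω := hneg (show a ≤ 0 from min_le_right _ _)
  have hsub : Icc a 0 ⊆ Ω := hΩc.out ha (hneg self_mem_Iic)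
  have hσa : σ a ≤ s := by
    have := sub_le_sub_of_one_le_hasDerivAt (min_le_right _ _)
      (fun x hx => hσ x (hsub hx)) (fun x hx => hk x (hsub hx))
    linarith [min_le_left (s - σ 0) 0]
  obtain ⟨b, hb, hσb⟩ := hunb s
  exact hΩc.isPreconnected.intermediate_value ha hb
    (fun t ht => (hσ t ht).continuousAt.continuousWithinAt) ⟨hσa, hσb⟩

lemma exists_hasDerivAt_inverse {Ω : Set ℝ} {σ k : ℝ → ℝ} (hΩ : IsOpen Ω)
    (hΩc : Ω.OrdConnected) (hσ : ∀ t ∈ Ω, HasDerivAt σ (k t) t) (hk : ∀ t ∈ Ω, 0 < k t)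
    (hsurj : SurjOn σ Ω univ) :
    ∃ τ : ℝ → ℝ, StrictMono τ ∧ (∀ s, τ s ∈ Ω) ∧ (∀ t ∈ Ω, τ (σ t) = t) ∧
      ∀ s, HasDerivAt τ (k (τ s))⁻¹ s := by
  have hmono : StrictMonoOn σ Ω := strictMonoOn_of_deriv_pos hΩc.convex
    (fun t ht => (hσ t ht).continuousAt.continuousWithinAt)
    fun t ht => (hσ t (interior_subset ht)).deriv ▸ hk t (interior_subset ht)
  have hex (s : ℝ) : ∃ t ∈ Ω, σ t = s := hsurj (mem_univ s)
  set τ := Function.invFunOn σ Ω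
  have hτΩ (s : ℝ) : τ s ∈ Ω := Function.invFunOn_mem (hex s)
  have hστ (s : ℝ) : σ (τ s) = s := Function.invFunOn_eq (hex s)
  have hτmono : StrictMono τ := fun a b hab => by
    rw [← hmono.lt_iff_lt (hτΩ a) (hτΩ b), hστ, hστ]
    exact hab
  have hτσ (t : ℝ) (ht : t ∈ Ω) : τ (σ t) = t := hmono.injOn (hτΩ _) ht (hστ _)
  have hrange : range τ = Ω :=
    subset_antisymm (range_subset_iff.2 hτΩ) fun t ht => ⟨σ t, hτσ t ht⟩
  refine ⟨τ, hτmono, hτΩ, hτσ, fun s => ?_⟩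
  have hcont : ContinuousAt τ s := continuousAt_of_monotoneOn_of_image_mem_nhds
    (hτmono.monotone.monotoneOn univ) univ_mem
    (by rw [image_univ, hrange]; exact hΩ.mem_nhds (hτΩ s))
  exact HasDerivAt.of_local_left_inverse hcont (hσ _ (hτΩ s)) (hk _ (hτΩ s)).ne'
    (Eventually.of_forall hστ)

lemma tendsto_ofReal_of_monotone {τ : ℝ → ℝ} {T : ℝ≥0∞} (hτ : Monotone τ)
    (hlt : ∀ s, ENNReal.ofReal (τ s) < T) (hsurj : ∀ t, ENNReal.ofReal t < T → ∃ s, τ s = t) :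
    Tendsto (fun s => ENNReal.ofReal (τ s)) atTop (𝓝 T) := by
  have hsup : ⨆ s, ENNReal.ofReal (τ s) = T := by
    refine le_antisymm (iSup_le fun s => (hlt s).le)
      (le_of_forall_lt_imp_le_of_dense fun c hc => ?_)
    obtain ⟨s, hs⟩ := hsurj c.toReal (by rwa [ENNReal.ofReal_toReal hc.ne_top])
    exact le_iSup_of_le s (by rw [hs, ENNReal.ofReal_toReal hc.ne_top])
  exact hsup ▸ tendsto_atTop_iSup fun a b hab => ENNReal.ofReal_le_ofReal (hτ hab)

end Clock

section TimeChange

variable {m : ℕ} {F : (Fin m → ℝ) → Fin m → ℝ} {C : ℝ}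

/-- The left side is `d/dt log (1 + 4|y|²)` along `ẏ = F y`. -/
lemma sum_mul_div_le_timeScale (hC : 0 ≤ C) (hgrowth : ∀ q i, |F q i| ≤ C * (1 + sqNorm q))
    (q : Fin m → ℝ) :
    4 * (2 * ∑ j, q j * F q j) / (1 + 4 * sqNorm q) ≤ 16 * m * C * timeScale q := by
  have hS := compactRoot_pos q
  have hS2 := compactRoot_sq q
  have hP : ∑ j, q j * F q j ≤ m * (compactRoot q / 2 * (C * (1 + sqNorm q))) := calc
    _ ≤ ∑ j : Fin m, compactRoot q / 2 * (C * (1 + sqNorm q)) :=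
      Finset.sum_le_sum fun j _ => (le_abs_self _).trans <| by
        rw [abs_mul]
        exact mul_le_mul (abs_le_compactRoot q j) (hgrowth q j) (abs_nonneg _) (by positivity)
    _ = _ := by simp
  have hρ : C * (1 + sqNorm q) ≤ C * compactRoot q ^ 2 :=
    mul_le_mul_of_nonneg_left (by linarith [sqNorm_nonneg q]) hC
  have hh : (m : ℝ) * C * compactRoot q ≤ m * C * (4 * timeScale q) :=
    mul_le_mul_of_nonneg_left (compactRoot_le_four_mul_timeScale q) (by positivity)
  rw [← hS2, div_le_iff₀ (by positivity)]
  nlinarith [mul_le_mul_of_nonneg_left hρ (by positivity : (0 : ℝ) ≤ m * compactRoot q)]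

lemma log_sub_le_of_hasDerivAt_timeScale (hC : 0 ≤ C)
    (hgrowth : ∀ q i, |F q i| ≤ C * (1 + sqNorm q)) {y : ℝ → Fin m → ℝ} {σ : ℝ → ℝ} {t : ℝ}
    (ht : 0 ≤ t) (hy : ∀ u ∈ Icc 0 t, HasDerivAt y (F (y u)) u)
    (hσ : ∀ u ∈ Icc 0 t, HasDerivAt σ (timeScale (y u)) u) :
    Real.log (1 + 4 * sqNorm (y t)) - 16 * m * C * σ t
      ≤ Real.log (1 + 4 * sqNorm (y 0)) - 16 * m * C * σ 0 := by
  have hderiv (u : ℝ) (hu : u ∈ Icc 0 t) :=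
    ((((hy u hu).sqNorm.const_mul 4).const_add 1).log
      (by linarith [sqNorm_nonneg (y u)])).sub ((hσ u hu).const_mul (16 * m * C))
  exact antitoneOn_of_hasDerivWithinAt_nonpos (convex_Icc 0 t)
    (fun u hu => (hderiv u hu).continuousAt.continuousWithinAt)
    (fun u hu => (hderiv u (interior_subset hu)).hasDerivWithinAt)
    (fun u _ => sub_nonpos.2 (sum_mul_div_le_timeScale hC hgrowth (y u)))
    ⟨le_rfl, ht⟩ ⟨ht, le_rfl⟩ ht

theorem IsMaxSol.exists_le_of_hasDerivAt_timeScale (hF : LocallyLipschitz F) (hC : 0 ≤ C)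
    (hgrowth : ∀ q i, |F q i| ≤ C * (1 + sqNorm q)) {y : ℝ → Fin m → ℝ} {T : ℝ≥0∞}
    (hy : IsMaxSol F y T) {σ : ℝ → ℝ} (hσ0 : σ 0 = 0)
    (hσ : ∀ t, 0 ≤ t → ENNReal.ofReal t < T → HasDerivAt σ (timeScale (y t)) t) (M : ℝ) :
    ∃ t, 0 ≤ t ∧ ENNReal.ofReal t < T ∧ M ≤ σ t := by
  by_contra! hM
  have hIcc {t : ℝ} (htT : ENNReal.ofReal t < T) (u : ℝ) (hu : u ∈ Icc 0 t) :
      ENNReal.ofReal u < T :=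
    (ENNReal.ofReal_le_ofReal hu.2).trans_lt htT
  have hM0 : 0 < M := by simpa [hσ0] using hM 0 le_rfl (by simpa using hy.1)
  have hTM : T ≤ ENNReal.ofReal M := by
    by_contra! hlt
    have := sub_le_sub_of_one_le_hasDerivAt hM0.le (fun u hu => hσ u hu.1 (hIcc hlt u hu))
      (fun u _ => one_le_timeScale _)
    linarith [hM M hM0.le hlt]
  obtain ⟨T', rfl⟩ : ∃ T' : ℝ, T = ENNReal.ofReal T' :=
    ⟨T.toReal, (ENNReal.ofReal_toReal (ne_top_of_le_ne_top ENNReal.ofReal_ne_top hTM)).symm⟩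
  obtain ⟨t, ht, htT, hR⟩ :=
    hy.exists_lt_norm hF (Real.exp (Real.log (1 + 4 * sqNorm (y 0)) + 16 * m * C * M))
  have htT' : ENNReal.ofReal t < ENNReal.ofReal T' :=
    (ENNReal.ofReal_lt_ofReal_iff (ht.trans_lt htT)).2 htT
  have hlog := log_sub_le_of_hasDerivAt_timeScale hC hgrowth ht
    (fun u hu => hy.2.1 u hu.1 (hIcc htT' u hu)) (fun u hu => hσ u hu.1 (hIcc htT' u hu))
  have hσM : 16 * m * C * σ t ≤ 16 * m * C * M :=
    mul_le_mul_of_nonneg_left (hM t ht htT').le (by positivity)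
  have hpos : 0 < 1 + 4 * sqNorm (y t) := by linarith [sqNorm_nonneg (y t)]
  have := Real.exp_le_exp.2 (show Real.log (1 + 4 * sqNorm (y t))
    ≤ Real.log (1 + 4 * sqNorm (y 0)) + 16 * m * C * M by rw [hσ0] at hlog; linarith)
  rw [Real.exp_log hpos] at this
  linarith [norm_le_one_add_sqNorm (y t), sqNorm_nonneg (y t)]

theorem IsMaxSol.exists_timeChange (hF : LocallyLipschitz F) (hC : 0 ≤ C)
    (hgrowth : ∀ q i, |F q i| ≤ C * (1 + sqNorm q)) {y : ℝ → Fin m → ℝ} {T : ℝ≥0∞}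
    (hy : IsMaxSol F y T) :
    ∃ τ : ℝ → ℝ, τ 0 = 0 ∧ Tendsto (fun s => ENNReal.ofReal (τ s)) atTop (𝓝 T) ∧
      ∀ s, 0 ≤ s → 0 ≤ τ s ∧ ENNReal.ofReal (τ s) < T ∧
        HasDerivAt τ (timeScale (y (τ s)))⁻¹ s := by
  set Ω := {t : ℝ | ENNReal.ofReal t < T}
  have hΩ : IsOpen Ω := isOpen_lt ENNReal.continuous_ofReal continuous_const
  have hΩc : Ω.OrdConnected :=
    IsLowerSet.ordConnected fun a b hab hb => (ENNReal.ofReal_le_ofReal hab).trans_lt hb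
  have hneg : Iic 0 ⊆ Ω := fun t ht => by simpa [Ω, ENNReal.ofReal_of_nonpos ht] using hy.1
  -- extended constantly to `t < 0`, so that `σ` is differentiable on the open set `Ω ∋ 0`
  set k : ℝ → ℝ := fun t => timeScale (y (max t 0))
  have hmax (t : ℝ) (ht : t ∈ Ω) : max t 0 ∈ Ω := by
    rcases le_total t 0 with h | h
    · rw [max_eq_right h]; exact hneg self_mem_Iic
    · rwa [max_eq_left h]
  have hk : ContinuousOn k Ω := fun t ht => ContinuousAt.continuousWithinAt <|
    continuous_timeScale.continuousAt.comp <| ContinuousAt.comp (f := fun t => max t 0)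
      (hy.2.1 _ (le_max_right t 0) (hmax t ht)).continuousAt (by fun_prop)
  set σ : ℝ → ℝ := fun t => ∫ u in 0..t, k u
  have hσ (t : ℝ) (ht : t ∈ Ω) : HasDerivAt σ (k t) t :=
    hasDerivAt_integral_of_continuousOn hΩ hΩc (hneg self_mem_Iic) hk ht
  have hunb (M : ℝ) : ∃ t ∈ Ω, M ≤ σ t := by
    obtain ⟨t, -, htT, hM⟩ := hy.exists_le_of_hasDerivAt_timeScale hF hC hgrowth (σ := σ)
      intervalIntegral.integral_same (fun t ht htT => by simpa [k, ht] using hσ t htT) M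
    exact ⟨t, htT, hM⟩
  obtain ⟨τ, hτmono, hτΩ, hτσ, hτ'⟩ := exists_hasDerivAt_inverse hΩ hΩc hσ
    (fun t _ => one_pos.trans_le (one_le_timeScale _))
    (surjOn_of_one_le_hasDerivAt hΩc hneg hσ (fun t _ => one_le_timeScale _) hunb)
  have hτ0 : τ 0 = 0 := by simpa [σ] using hτσ 0 (hneg self_mem_Iic)
  refine ⟨τ, hτ0, tendsto_ofReal_of_monotone hτmono.monotone hτΩ
    fun t ht => ⟨σ t, hτσ t ht⟩, fun s hs => ?_⟩
  have hτs : 0 ≤ τ s := hτ0 ▸ hτmono.monotone hs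
  exact ⟨hτs, hτΩ s, by simpa [k, hτs] using hτ' s⟩

lemma lintegral_Ioi_ofReal_eq_of_hasDerivAt {τ g : ℝ → ℝ} {T : ℝ≥0∞}
    (hτ : ∀ s, 0 ≤ s → HasDerivAt τ (g s) s) (hg : ∀ s, 0 ≤ s → 0 ≤ g s) (hτ0 : τ 0 = 0)
    (hlim : Tendsto (fun s => ENNReal.ofReal (τ s)) atTop (𝓝 T)) :
    ∫⁻ s in Ioi 0, ENNReal.ofReal (g s) = T := by
  have hmeas : AEMeasurable (fun s => ENNReal.ofReal (g s)) (volume.restrict (Ioi 0)) :=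
    ENNReal.measurable_ofReal.comp_aemeasurable <| (measurable_deriv τ).aemeasurable.congr <|
      (ae_restrict_mem measurableSet_Ioi).mono fun s hs => (hτ s (le_of_lt hs)).deriv
  refine (aecover_Iic tendsto_id).restrict.lintegral_eq_of_tendsto T hmeas <|
    hlim.congr' <| (eventually_ge_atTop 0).mono fun b hb => ?_
  have hcont : ContinuousOn τ (Icc 0 b) := fun s hs => (hτ s hs.1).continuousAt.continuousWithinAt
  have hint : IntegrableOn g (Ioc 0 b) := intervalIntegral.integrableOn_deriv_of_nonneg hcont
    (fun s hs => hτ s hs.1.le) (fun s hs => hg s hs.1.le)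
  dsimp only [id]
  rw [Measure.restrict_restrict measurableSet_Iic, Iic_inter_Ioi,
    ← ofReal_integral_eq_lintegral_ofReal hint
      ((ae_restrict_mem measurableSet_Ioc).mono fun s hs => hg s hs.1.le),
    ← intervalIntegral.integral_of_le hb,
    intervalIntegral.integral_eq_sub_of_hasDerivAt_of_le hb hcont (fun s hs => hτ s hs.1.le)
      ((intervalIntegrable_iff_integrableOn_Ioc_of_le hb).2 hint), hτ0, sub_zero]

end TimeChange

section RiccatiField

variable {m n : ℕ} (I : Finset (Fin m)) (AV : Matrix (Fin m) (Fin m) ℝ)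
  (π : Fin m → Matrix (Fin n) (Fin n) ℝ) (AC : Matrix (Fin m) (Fin n) ℝ) (w : Fin n → ℝ)

lemma contDiff_fRic : ContDiff ℝ 1 (fun q : Fin m → ℝ => fRic I AV π AC q w) := by
  refine contDiff_pi.2 fun i => ?_
  unfold fRic
  fun_prop

lemma exists_abs_fRic_le :
    ∃ C, 0 ≤ C ∧ ∀ q i, |fRic I AV π AC q w i| ≤ C * (1 + sqNorm q) := by
  refine ⟨1 + ∑ i, ∑ k, |AV i k| + ∑ i, |gfun π AC w i|, by positivity, fun q i => ?_⟩
  have hρ : 1 ≤ 1 + sqNorm q := by linarith [sqNorm_nonneg q]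
  have hq (k : Fin m) : |q k| ≤ 1 + sqNorm q :=
    (norm_le_pi_norm q k).trans (norm_le_one_add_sqNorm q)
  have hquad : |1 / 2 * q i ^ 2 * (if i ∈ I then 1 else 0)| ≤ 1 + sqNorm q := by
    split_ifs
    · rw [mul_one, abs_of_nonneg (by positivity)]
      linarith [sq_le_sqNorm q i, sq_nonneg (q i)]
    · simpa using hρ.trans' zero_le_one
  have hlin : |∑ k ∈ Finset.univ.filter (· ≤ i), AV i k * q k|
      ≤ (∑ i, ∑ k, |AV i k|) * (1 + sqNorm q) := calc
    _ ≤ ∑ k ∈ Finset.univ.filter (· ≤ i), |AV i k| * (1 + sqNorm q) :=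
      (Finset.abs_sum_le_sum_abs _ _).trans <| Finset.sum_le_sum fun k _ => by
        rw [abs_mul]; exact mul_le_mul_of_nonneg_left (hq k) (abs_nonneg _)
    _ ≤ ∑ k, |AV i k| * (1 + sqNorm q) :=
      Finset.sum_le_sum_of_subset_of_nonneg (Finset.filter_subset _ _) fun _ _ _ => by positivity
    _ ≤ _ := by
      rw [← Finset.sum_mul]
      exact mul_le_mul_of_nonneg_right (Finset.single_le_sum (f := fun i => ∑ k, |AV i k|)
        (fun _ _ => by positivity) (Finset.mem_univ i)) (by positivity)
  have hconst : |gfun π AC w i| ≤ (∑ i, |gfun π AC w i|) * (1 + sqNorm q) :=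
    (Finset.single_le_sum (f := fun i => |gfun π AC w i|) (fun _ _ => abs_nonneg _)
      (Finset.mem_univ i)).trans (le_mul_of_one_le_right (by positivity) hρ)
  have := abs_add_three (1 / 2 * q i ^ 2 * (if i ∈ I then 1 else 0))
    (∑ k ∈ Finset.univ.filter (· ≤ i), AV i k * q k) (gfun π AC w i)
  rw [fRic]
  linarith

end RiccatiField

theorem stmt14_general (m n : ℕ)
    (I : Finset (Fin m))
    (AV : Matrix (Fin m) (Fin m) ℝ)
    (π : Fin m → Matrix (Fin n) (Fin n) ℝ)
    (AC : Matrix (Fin m) (Fin n) ℝ)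
    (v : Fin m → ℝ) (w : Fin n → ℝ)
    (y : ℝ → Fin m → ℝ) (Tstar : ℝ≥0∞)
    (hy : IsMaxSol (fun q => fRic I AV π AC q w) y Tstar) (hy0 : y 0 = v) :
    ∃ x : ℝ → Fin m → ℝ,
      x 0 = (fun i => 2 * v i / (1 + Real.sqrt (1 + 4 * ∑ j, (v j) ^ 2)))
      ∧ (∀ s : ℝ, 0 ≤ s → HasDerivAt x
          (fun i => (1 + ∑ j, (x s j) ^ 2) * ftilde I AV π AC w (x s) i
            - 2 * (∑ j, x s j * ftilde I AV π AC w (x s) j) * x s i) s)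
      ∧ (∀ s : ℝ, 0 ≤ s → ∑ j, (x s j) ^ 2 < 1)
      ∧ Tstar = ∫⁻ s in Set.Ioi (0 : ℝ),
          ENNReal.ofReal (1 - (∑ j, (x s j) ^ 2) ^ 2) := by
  obtain ⟨C, hC, hgrowth⟩ := exists_abs_fRic_le I AV π AC w
  obtain ⟨τ, hτ0, hlim, hτ⟩ :=
    hy.exists_timeChange (contDiff_fRic I AV π AC w).locallyLipschitz hC hgrowth
  refine ⟨fun s => compactify (y (τ s)), by simp only [hτ0, hy0]; rfl, fun s hs => ?_,
    fun s _ => sqNorm_compactify_lt_one _, ?_⟩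
  · obtain ⟨hτs, hτT, hτ'⟩ := hτ s hs
    exact HasDerivAt.compactify (c := y ∘ τ) (F := fun q => fRic I AV π AC q w)
      ((hy.2.1 _ hτs hτT).scomp s hτ')
  · have hint (s : ℝ) : 1 - (∑ j, compactify (y (τ s)) j ^ 2) ^ 2 = (timeScale (y (τ s)))⁻¹ :=
      one_sub_sqNorm_compactify_sq _
    simp only [hint]
    exact (lintegral_Ioi_ofReal_eq_of_hasDerivAt (fun s hs => (hτ s hs).2.2)
      (fun s _ => inv_nonneg.2 (zero_le_one.trans (one_le_timeScale _))) hτ0 hlim).symm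

/-- the compactified system `dx/ds = (1 + R²) f̃(x,w) − 2 (x · f̃(x,w)) x`
with `x(0) = 2v/(1 + √(1 + 4|v|²))` has a global solution with `R(s) < 1` for all finite
`s ≥ 0`, and the blow-up time of (Ric-V) is `T*(u) = ∫₀^∞ (1 − R(s)⁴) ds`. -/
theorem stmt14 (m n : ℕ) (hm : 1 ≤ m)
    (I : Finset (Fin m)) (hI : I.Nonempty)
    (AV : Matrix (Fin m) (Fin m) ℝ)
    (hAVtri : ∀ i k : Fin m, i < k → AV i k = 0)
    (hAVdiag : ∀ i : Fin m, AV i i < 0)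
    (hAVoff : ∀ i k : Fin m, i ≠ k → 0 ≤ AV i k)
    (π : Fin m → Matrix (Fin n) (Fin n) ℝ)
    (hπ : ∀ i, (π i).PosSemidef)
    (AC : Matrix (Fin m) (Fin n) ℝ) (AD : Matrix (Fin n) (Fin n) ℝ)
    (v : Fin m → ℝ) (w : Fin n → ℝ) (hw : AD.mulVec w = 0)
    (y : ℝ → Fin m → ℝ) (Tstar : ℝ≥0∞)
    (hy : IsMaxSol (fun q => fRic I AV π AC q w) y Tstar) (hy0 : y 0 = v) :
    ∃ x : ℝ → Fin m → ℝ,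
      x 0 = (fun i => 2 * v i / (1 + Real.sqrt (1 + 4 * ∑ j, (v j) ^ 2)))
      ∧ (∀ s : ℝ, 0 ≤ s → HasDerivAt x
          (fun i => (1 + ∑ j, (x s j) ^ 2) * ftilde I AV π AC w (x s) i
            - 2 * (∑ j, x s j * ftilde I AV π AC w (x s) j) * x s i) s)
      ∧ (∀ s : ℝ, 0 ≤ s → ∑ j, (x s j) ^ 2 < 1)
      ∧ Tstar = ∫⁻ s in Set.Ioi (0 : ℝ),
          ENNReal.ofReal (1 - (∑ j, (x s j) ^ 2) ^ 2) :=
  stmt14_general m n I AV π AC v w y Tstar hy hy0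

end
end

section
/- Suppose u = (v,w) ∈ ℝ^m × Ker A^D satisfies T*(u) < ∞, let y be the maximal solution of (Ric-V) with y(0) = v, and let l ≤ m be the smallest index such that y_l is unbounded on [0, T*(u)) (so y_k is bounded on [0, T*(u)) for all k < l). Then l ∈ I, and there is a positive constant c such that lim_{t ↑ T*(u)} (T*(u) − t) y_l(t) = c. -/
open Filter Topology

noncomputable section

open scoped ENNReal

/-!
Split `ẏ_l = ½ y_l² 1_{l ∈ I} + A^V_{ll} y_l + b(t)`, where `b` collects the components `y_k`,
`k < l`, and `g_l(w)`; by minimality of `l`, `b` is bounded on `[0, T*)`. If `l ∉ I`, this is a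
linear equation with negative coefficient and bounded forcing, and a barrier argument keeps `y_l`
bounded; hence `l ∈ I`. Then `ẏ_l > 0` wherever `|y_l|` is large, so a large value of `y_l` is
never left again, and unboundedness gives `y_l → ∞` as `t ↑ T*`. Finally `ẏ_l / y_l² → 1/2`, and
L'Hôpital's rule for `(T* - t) / y_l⁻¹` gives the limit `c = 2`.
-/

open Set

theorem le_of_hasDerivAt_pos_at_level {x x' : ℝ → ℝ} {s t L : ℝ}
    (hx : ∀ r ∈ Icc s t, HasDerivAt x (x' r) r) (hs : L ≤ x s)
    (hL : ∀ r ∈ Ico s t, x r = L → 0 < x' r) : ∀ r ∈ Icc s t, L ≤ x r := by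
  intro r hr
  have := image_le_of_deriv_right_lt_deriv_boundary (f := fun r => -x r) (f' := fun r => -x' r)
    (B := fun _ => -L) (B' := fun _ => 0)
    (fun r hr => (hx r hr).continuousAt.neg.continuousWithinAt)
    (fun r hr => (hx r (Ico_subset_Icc_self hr)).neg.hasDerivWithinAt)
    (neg_le_neg hs) (fun _ => hasDerivAt_const _ _)
    (fun r hr hxr => neg_neg_of_pos (hL r hr (neg_injective hxr))) hr
  exact neg_le_neg_iff.1 this

theorem min_le_of_hasDerivAt_linear {x b : ℝ → ℝ} {T a B : ℝ} (ha : a < 0)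
    (hx : ∀ t ∈ Ico 0 T, HasDerivAt x (a * x t + b t) t) (hb : ∀ t ∈ Ico 0 T, -B ≤ b t) :
    ∀ t ∈ Ico 0 T, min (x 0) (B / a - 1) ≤ x t := by
  intro t ht
  have hsub : Icc 0 t ⊆ Ico 0 T := Icc_subset_Ico_right ht.2
  refine le_of_hasDerivAt_pos_at_level (fun r hr => hx r (hsub hr)) (min_le_left _ _) ?_
    t ⟨ht.1, le_rfl⟩
  intro r hr hxr
  have hBa : B / a * a = B := div_mul_cancel₀ _ ha.ne
  have hxr_le : x r ≤ B / a - 1 := hxr ▸ min_le_right _ _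
  nlinarith [hb r (hsub (Ico_subset_Icc_self hr))]

theorem exists_abs_le_of_hasDerivAt_linear {x b : ℝ → ℝ} {T a B : ℝ} (ha : a < 0)
    (hx : ∀ t ∈ Ico 0 T, HasDerivAt x (a * x t + b t) t) (hb : ∀ t ∈ Ico 0 T, |b t| ≤ B) :
    ∃ C, ∀ t ∈ Ico 0 T, |x t| ≤ C := by
  have hlow := min_le_of_hasDerivAt_linear ha hx fun t ht => (abs_le.1 (hb t ht)).1
  have hup := min_le_of_hasDerivAt_linear (x := -x) (b := -b) ha
    (fun t ht => by simpa only [Pi.neg_apply, mul_neg, neg_add] using (hx t ht).neg)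
    (fun t ht => neg_le_neg (abs_le.1 (hb t ht)).2)
  have hmin : ∀ u : ℝ, |u| = |x 0| → -(|x 0| + |B / a - 1|) ≤ min u (B / a - 1) := fun u hu =>
    le_min (by linarith [neg_abs_le u, abs_nonneg (B / a - 1)])
      (by linarith [neg_abs_le (B / a - 1), abs_nonneg u])
  refine ⟨|x 0| + |B / a - 1|, fun t ht => abs_le.2 ⟨(hmin _ rfl).trans (hlow t ht), ?_⟩⟩
  have := (hmin _ (abs_neg _)).trans (hup t ht)
  rw [Pi.neg_apply] at this
  linarith

theorem exists_riccati_pos_of_le_abs (a B : ℝ) :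
    ∃ M, ∀ r β : ℝ, M ≤ |r| → |β| ≤ B → 0 < r ^ 2 / 2 + a * r + β := by
  refine ⟨2 * (|a| + |B|) + 1, fun r β hr hβ => ?_⟩
  have har : -(|a| * |r|) ≤ a * r := by rw [← abs_mul]; exact neg_abs_le _
  have hβ' : -|B| ≤ β := by linarith [neg_abs_le β, le_abs_self B]
  have hr2 : r ^ 2 = |r| ^ 2 := (sq_abs r).symm
  nlinarith [abs_nonneg a, abs_nonneg B]

theorem tendsto_atTop_of_hasDerivAt_pos_of_le_abs {x x' : ℝ → ℝ} {T M : ℝ}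
    (hx : ∀ t ∈ Ico 0 T, HasDerivAt x (x' t) t)
    (hpos : ∀ t ∈ Ico 0 T, M ≤ |x t| → 0 < x' t)
    (hunb : ¬ ∃ C, ∀ t ∈ Ico 0 T, |x t| ≤ C) : Tendsto x (𝓝[<] T) atTop := by
  have hbarrier : ∀ s ∈ Ico 0 T, ∀ t ∈ Ico s T, ∀ L, M ≤ |L| → L ≤ x s → L ≤ x t := by
    intro s hs t ht L hL hsL
    have hsub : Icc s t ⊆ Ico 0 T := fun r hr => ⟨hs.1.trans hr.1, hr.2.trans_lt ht.2⟩
    exact le_of_hasDerivAt_pos_at_level (fun r hr => hx r (hsub hr)) hsL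
      (fun r hr hxr => hpos r (hsub (Ico_subset_Icc_self hr)) (hxr ▸ hL)) t ⟨ht.1, le_rfl⟩
  have hlow : ∀ t ∈ Ico 0 T, -(|x 0| + |M|) ≤ x t := fun t ht =>
    hbarrier 0 ⟨le_rfl, ht.1.trans_lt ht.2⟩ t ht _
      (by rw [abs_neg, abs_of_nonneg (by positivity)]
          linarith [le_abs_self M, abs_nonneg (x 0)])
      (by linarith [neg_abs_le (x 0), abs_nonneg M])
  refine tendsto_atTop.2 fun C => ?_
  push Not at hunb
  obtain ⟨s, hs, hxs⟩ := hunb (max (|C| + |M|) (|x 0| + |M|))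
  have hCs : |C| + |M| < x s := by
    rcases abs_cases (x s) with ⟨h, -⟩ | ⟨h, -⟩
    · exact h ▸ (le_max_left _ _).trans_lt hxs
    · linarith [hlow s hs, le_max_right (|C| + |M|) (|x 0| + |M|)]
  filter_upwards [Ioo_mem_nhdsLT hs.2] with t ht
  calc C ≤ |C| + |M| := by linarith [le_abs_self C, abs_nonneg M]
    _ ≤ x t := hbarrier s hs t ⟨ht.1.le, ht.2⟩ _
      (by rw [abs_of_nonneg (by positivity)]; linarith [le_abs_self M, abs_nonneg C]) hCs.le

theorem tendsto_riccati_div_sq {ι : Type*} {l : Filter ι} {x b : ι → ℝ} {a B : ℝ}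
    (hx : Tendsto x l atTop) (hb : ∀ᶠ t in l, |b t| ≤ B) :
    Tendsto (fun t => (x t ^ 2 / 2 + a * x t + b t) / x t ^ 2) l (𝓝 (1 / 2)) := by
  have hinv := hx.inv_tendsto_atTop
  have hinv_sq : Tendsto (fun t => x⁻¹ t * x⁻¹ t) l (𝓝 0) := by
    simpa only [mul_zero] using hinv.mul hinv
  have hlim := ((hinv.const_mul a).add
    (hinv_sq.zero_mul_isBoundedUnder_le (isBoundedUnder_of_eventually_le hb))).const_add (1 / 2)
  simp only [mul_zero, add_zero] at hlim
  refine hlim.congr' ?_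
  filter_upwards [hx.eventually_gt_atTop 0] with t ht
  simp only [Pi.inv_apply]
  field_simp
  ring

theorem tendsto_sub_mul_of_hasDerivAt_riccati {x b : ℝ → ℝ} {T a B : ℝ}
    (hx : ∀ t ∈ Ico 0 T, HasDerivAt x (x t ^ 2 / 2 + a * x t + b t) t)
    (hb : ∀ t ∈ Ico 0 T, |b t| ≤ B) (hunb : ¬ ∃ C, ∀ t ∈ Ico 0 T, |x t| ≤ C) :
    Tendsto (fun t => (T - t) * x t) (𝓝[<] T) (𝓝 2) := by
  obtain ⟨M, hM⟩ := exists_riccati_pos_of_le_abs a B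
  have htop : Tendsto x (𝓝[<] T) atTop :=
    tendsto_atTop_of_hasDerivAt_pos_of_le_abs hx (fun t ht hxt => hM _ _ hxt (hb t ht)) hunb
  have hT : 0 < T := by
    by_contra! hT
    exact hunb ⟨0, fun t ht => absurd (ht.1.trans_lt ht.2) hT.not_gt⟩
  have hb_ev : ∀ᶠ t in 𝓝[<] T, |b t| ≤ B := by
    filter_upwards [Ioo_mem_nhdsLT hT] with t ht using hb t (Ioo_subset_Ico_self ht)
  obtain ⟨s, hsT, hs⟩ := mem_nhdsLT_iff_exists_Ioo_subset.1
    ((htop.eventually_ge_atTop (max M 1)).and (Ioo_mem_nhdsLT hT))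
  have hxpos : ∀ t ∈ Ioo s T, 0 < x t := fun t ht =>
    one_pos.trans_le ((le_max_right _ _).trans (hs ht).1)
  have hderiv_pos : ∀ t ∈ Ioo s T, 0 < x t ^ 2 / 2 + a * x t + b t := fun t ht =>
    hM _ _ ((le_max_left _ _).trans ((hs ht).1.trans (le_abs_self _)))
      (hb t (Ioo_subset_Ico_self (hs ht).2))
  have hlh := HasDerivAt.lhopital_zero_left_on_Ioo hsT (f := fun t => T - t) (f' := fun _ => -1)
    (g := fun t => (x t)⁻¹) (g' := fun t => -(x t ^ 2 / 2 + a * x t + b t) / x t ^ 2)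
    (fun t _ => by simpa using (hasDerivAt_id t).const_sub T)
    (fun t ht => (hx t (Ioo_subset_Ico_self (hs ht).2)).inv (hxpos t ht).ne')
    (fun t ht => div_ne_zero (neg_ne_zero.2 (hderiv_pos t ht).ne') (pow_ne_zero _ (hxpos t ht).ne'))
    (((continuous_sub_left T).tendsto' T 0 (sub_self T)).mono_left nhdsWithin_le_nhds)
    htop.inv_tendsto_atTop
    (by
      have := (tendsto_riccati_div_sq (a := a) htop hb_ev).inv₀ (by norm_num)
      norm_num at this
      refine this.congr fun t => ?_
      simp only [neg_div, div_neg, neg_neg, one_div_div])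
  simpa only [div_inv_eq_mul] using hlh

theorem exists_abs_sum_mul_le {α ι : Type*} {S : Set α} (s : Finset ι) (c : ι → ℝ)
    (z : α → ι → ℝ) (h : ∀ k ∈ s, ∃ C, ∀ t ∈ S, |z t k| ≤ C) :
    ∃ B, ∀ t ∈ S, |∑ k ∈ s, c k * z t k| ≤ B := by
  choose! C hC using h
  refine ⟨∑ k ∈ s, |c k| * C k, fun t ht => (Finset.abs_sum_le_sum_abs _ _).trans ?_⟩
  refine Finset.sum_le_sum fun k hk => ?_
  rw [abs_mul]
  exact mul_le_mul_of_nonneg_left (hC k hk t ht) (abs_nonneg _)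

theorem fRic_eq_diag_add {m n : ℕ} (I : Finset (Fin m)) (AV : Matrix (Fin m) (Fin m) ℝ)
    (π : Fin m → Matrix (Fin n) (Fin n) ℝ) (AC : Matrix (Fin m) (Fin n) ℝ)
    (q : Fin m → ℝ) (w : Fin n → ℝ) (l : Fin m) :
    fRic I AV π AC q w l = (1 / 2) * q l ^ 2 * (if l ∈ I then 1 else 0) + AV l l * q l
      + (∑ k ∈ Finset.univ.filter (· < l), AV l k * q k + gfun π AC w l) := by
  have hfilter : Finset.univ.filter (· ≤ l) = insert l (Finset.univ.filter (· < l)) := by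
    ext k
    simp [le_iff_lt_or_eq, or_comm]
  rw [fRic, hfilter, Finset.sum_insert (by simp)]
  ring

theorem stmt16_general (m n : ℕ)
    (I : Finset (Fin m))
    (AV : Matrix (Fin m) (Fin m) ℝ)
    (hAVdiag : ∀ i : Fin m, AV i i < 0)
    (π : Fin m → Matrix (Fin n) (Fin n) ℝ)
    (AC : Matrix (Fin m) (Fin n) ℝ)
    (w : Fin n → ℝ)
    (y : ℝ → Fin m → ℝ) (Tstar : ℝ)
    (hy : IsMaxSol (fun q => fRic I AV π AC q w) y (ENNReal.ofReal Tstar))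
    (l : Fin m)
    (hl : ¬ ∃ C : ℝ, ∀ t ∈ Set.Ico (0 : ℝ) Tstar, |y t l| ≤ C)
    (hlmin : ∀ k : Fin m, k < l → ∃ C : ℝ, ∀ t ∈ Set.Ico (0 : ℝ) Tstar, |y t k| ≤ C) :
    l ∈ I ∧ ∃ c : ℝ, 0 < c ∧
      Filter.Tendsto (fun t => (Tstar - t) * y t l)
        (nhdsWithin Tstar (Set.Iio Tstar)) (nhds c) := by
  set b : ℝ → ℝ := fun t => ∑ k ∈ Finset.univ.filter (· < l), AV l k * y t k + gfun π AC w l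
  have hderiv : ∀ t ∈ Ico 0 Tstar, HasDerivAt (fun s => y s l)
      ((1 / 2) * y t l ^ 2 * (if l ∈ I then 1 else 0) + AV l l * y t l + b t) t := fun t ht =>
    fRic_eq_diag_add I AV π AC (y t) w l ▸ hasDerivAt_pi.1
      (hy.2.1 t ht.1 ((ENNReal.ofReal_lt_ofReal_iff_of_nonneg ht.1).2 ht.2)) l
  obtain ⟨B, hB⟩ :=
    exists_abs_sum_mul_le _ (AV l) y fun k hk => hlmin k (Finset.mem_filter.1 hk).2
  have hb : ∀ t ∈ Ico 0 Tstar, |b t| ≤ B + |gfun π AC w l| := fun t ht =>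
    (abs_add_le _ _).trans (add_le_add_left (hB t ht) _)
  have hlI : l ∈ I := by
    by_contra hlI
    refine hl (exists_abs_le_of_hasDerivAt_linear (hAVdiag l) (fun t ht => ?_) hb)
    simpa [hlI] using hderiv t ht
  refine ⟨hlI, 2, two_pos,
    tendsto_sub_mul_of_hasDerivAt_riccati (a := AV l l) (fun t ht => ?_) hb hl⟩
  convert hderiv t ht using 1
  simp only [hlI, if_true]
  ring

/-- if `T*(u) < ∞` and `l` is the smallest index such that `y_l` is
unbounded on `[0, T*(u))`, then `l ∈ I` and `(T*(u) − t) y_l(t) → c` for some `c > 0` as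
`t ↑ T*(u)`. -/
theorem stmt16 (m n : ℕ) (hm : 1 ≤ m)
    (I : Finset (Fin m)) (hI : I.Nonempty)
    (AV : Matrix (Fin m) (Fin m) ℝ)
    (hAVtri : ∀ i k : Fin m, i < k → AV i k = 0)
    (hAVdiag : ∀ i : Fin m, AV i i < 0)
    (hAVoff : ∀ i k : Fin m, i ≠ k → 0 ≤ AV i k)
    (π : Fin m → Matrix (Fin n) (Fin n) ℝ)
    (hπ : ∀ i, (π i).PosSemidef)
    (AC : Matrix (Fin m) (Fin n) ℝ) (AD : Matrix (Fin n) (Fin n) ℝ)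
    (v : Fin m → ℝ) (w : Fin n → ℝ) (hw : AD.mulVec w = 0)
    (y : ℝ → Fin m → ℝ) (Tstar : ℝ) (hTpos : 0 < Tstar)
    (hy : IsMaxSol (fun q => fRic I AV π AC q w) y (ENNReal.ofReal Tstar))
    (hy0 : y 0 = v)
    (l : Fin m)
    (hl : ¬ ∃ C : ℝ, ∀ t ∈ Set.Ico (0 : ℝ) Tstar, |y t l| ≤ C)
    (hlmin : ∀ k : Fin m, k < l → ∃ C : ℝ, ∀ t ∈ Set.Ico (0 : ℝ) Tstar, |y t k| ≤ C) :
    l ∈ I ∧ ∃ c : ℝ, 0 < c ∧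
      Filter.Tendsto (fun t => (Tstar - t) * y t l)
        (nhdsWithin Tstar (Set.Iio Tstar)) (nhds c) :=
  stmt16_general m n I AV hAVdiag π AC w y Tstar hy l hl hlmin
end
end

section
/- Let h : [0,∞) → ℝ be continuous with a finite limit h(∞) = lim_{t→∞} h(t), and let x : [0,∞) → ℝ be differentiable with ẋ(t) = x(t)²/2 + h(t) for all t ≥ 0. If the trajectory {x(t) : t ≥ 0} is bounded, then h(∞) ≤ 0, the limit x(∞) = lim_{t→∞} x(t) exists in ℝ, and x(∞)²/2 + h(∞) = 0. -/
/-!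
If `x(t) = c` at a late time and `c²/2 + L > 0`, then `ẋ > 0` there, so `x` can only cross the
level `c` upwards; symmetrically, it can only cross downwards when `c²/2 + L < 0`. A level strictly
between `liminf x` and `limsup x` is crossed both ways infinitely often, so it is a zero of
`c ↦ c²/2 + L`; as there are at most two of them, `liminf x = limsup x` and `x` converges. Finally a bounded function whose derivative tends
to `d` must have `d = 0`, since otherwise it grows at least linearly; the same argument with
`ẋ ≥ h → L` gives `L ≤ 0`.
-/

open Filter Topology Set

section Fencing

variable {x g : ℝ → ℝ}

theorem add_mul_sub_le_of_hasDerivAt_of_le {T c s : ℝ} (hd : ∀ t ≥ T, HasDerivAt x (g t) t)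
    (hg : ∀ t ≥ T, c ≤ g t) (hs : T ≤ s) : x T + c * (s - T) ≤ x s := by
  have hlin : ∀ t, HasDerivAt (fun t => x T + c * (t - T)) c t := fun t => by
    simpa using (((hasDerivAt_id t).sub_const T).const_mul c).const_add (x T)
  exact image_le_of_deriv_right_le_deriv_boundary (f' := fun _ => c)
    (fun t _ => (hlin t).continuousAt.continuousWithinAt)
    (fun t _ => (hlin t).hasDerivWithinAt) (by simp)
    (fun t ht => (hd t ht.1).continuousAt.continuousWithinAt)
    (fun t ht => (hd t ht.1).hasDerivWithinAt) (fun t ht => hg t ht.1) ⟨hs, le_rfl⟩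

theorem tendsto_atTop_of_hasDerivAt_of_le {c : ℝ} (hc : 0 < c)
    (hd : ∀ᶠ t in atTop, HasDerivAt x (g t) t) (hg : ∀ᶠ t in atTop, c ≤ g t) :
    Tendsto x atTop atTop := by
  obtain ⟨T, hT⟩ := eventually_atTop.1 (hd.and hg)
  have hlin : Tendsto (fun s => x T + c * (s - T)) atTop atTop :=
    tendsto_atTop_add_const_left _ _
      ((tendsto_atTop_add_const_right _ _ tendsto_id).const_mul_atTop hc)
  exact tendsto_atTop_mono' atTop ((eventually_ge_atTop T).mono fun s hs =>
    add_mul_sub_le_of_hasDerivAt_of_le (fun t ht => (hT t ht).1) (fun t ht => (hT t ht).2) hs) hlin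

theorem eq_zero_of_tendsto_hasDerivAt_of_isBoundedUnder {d : ℝ}
    (hle : IsBoundedUnder (· ≤ ·) atTop x) (hge : IsBoundedUnder (· ≥ ·) atTop x)
    (hd : ∀ᶠ t in atTop, HasDerivAt x (g t) t) (hg : Tendsto g atTop (𝓝 d)) : d = 0 := by
  rcases lt_trichotomy d 0 with hneg | hzero | hpos
  · refine absurd hge (not_isBoundedUnder_of_tendsto_atBot ?_)
    refine tendsto_neg_atTop_iff.1 (tendsto_atTop_of_hasDerivAt_of_le
      (show 0 < -(d / 2) by linarith) (hd.mono fun t ht => ht.neg) ?_)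
    filter_upwards [hg.eventually (eventually_le_nhds (show d < d / 2 by linarith))] with t ht
    exact neg_le_neg ht
  · exact hzero
  · exact absurd hle (not_isBoundedUnder_of_tendsto_atTop
      (tendsto_atTop_of_hasDerivAt_of_le (half_pos hpos) hd
        (hg.eventually (eventually_ge_nhds (half_lt_self hpos)))))

theorem le_of_hasDerivAt_pos_of_eq {T c t₀ t : ℝ} (hd : ∀ s ≥ T, HasDerivAt x (g s) s)
    (hpos : ∀ s ≥ T, x s = c → 0 < g s) (ht₀ : T ≤ t₀) (hc : c ≤ x t₀) (ht : t₀ ≤ t) :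
    c ≤ x t :=
  image_le_of_deriv_right_lt_deriv_boundary' (f' := fun _ => 0) continuousOn_const
    (fun _ _ => hasDerivWithinAt_const _ _ _) hc
    (fun s hs => (hd s (ht₀.trans hs.1)).continuousAt.continuousWithinAt)
    (fun s hs => (hd s (ht₀.trans hs.1)).hasDerivWithinAt)
    (fun s hs hs' => hpos s (ht₀.trans hs.1) hs'.symm) ⟨ht, le_rfl⟩

theorem eventually_le_of_frequently_lt_of_hasDerivAt_pos {c : ℝ}
    (hd : ∀ᶠ t in atTop, HasDerivAt x (g t) t) (hpos : ∀ᶠ t in atTop, x t = c → 0 < g t)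
    (habove : ∃ᶠ t in atTop, c < x t) : ∀ᶠ t in atTop, c ≤ x t := by
  obtain ⟨T, hT⟩ := eventually_atTop.1 (hd.and hpos)
  obtain ⟨t₀, hct₀, hTt₀⟩ := (habove.and_eventually (eventually_ge_atTop T)).exists
  filter_upwards [eventually_ge_atTop t₀] with t ht
  exact le_of_hasDerivAt_pos_of_eq (fun s hs => (hT s hs).1) (fun s hs => (hT s hs).2) hTt₀
    hct₀.le ht

end Fencing

theorem exists_mem_Ioo_sq_ne {m M : ℝ} (hmM : m < M) (k : ℝ) : ∃ c ∈ Ioo m M, c ^ 2 ≠ k := by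
  by_contra! H
  have h₁ := H ((3 * m + M) / 4) ⟨by linarith, by linarith⟩
  have h₂ := H ((m + M) / 2) ⟨by linarith, by linarith⟩
  have h₃ := H ((m + 3 * M) / 4) ⟨by linarith, by linarith⟩
  nlinarith

section Riccati

variable {h x : ℝ → ℝ} {L : ℝ}

theorem nonpos_of_riccati_of_isBoundedUnder (hlim : Tendsto h atTop (𝓝 L))
    (hode : ∀ᶠ t in atTop, HasDerivAt x (x t ^ 2 / 2 + h t) t)
    (hle : IsBoundedUnder (· ≤ ·) atTop x) : L ≤ 0 := by
  by_contra! hL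
  refine not_isBoundedUnder_of_tendsto_atTop (tendsto_atTop_of_hasDerivAt_of_le (half_pos hL) hode
    ?_) hle
  filter_upwards [hlim.eventually (eventually_ge_nhds (half_lt_self hL))] with t ht
  nlinarith [sq_nonneg (x t)]

theorem sq_div_two_add_eq_zero_of_riccati_of_frequently {c : ℝ}
    (hlim : Tendsto h atTop (𝓝 L)) (hode : ∀ᶠ t in atTop, HasDerivAt x (x t ^ 2 / 2 + h t) t)
    (habove : ∃ᶠ t in atTop, c < x t) (hbelow : ∃ᶠ t in atTop, x t < c) :
    c ^ 2 / 2 + L = 0 := by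
  by_contra hne
  rcases lt_or_gt_of_ne hne with hneg | hpos
  · have hdown : ∀ᶠ t in atTop, -x t = -c → 0 < -(x t ^ 2 / 2 + h t) := by
      filter_upwards [hlim.eventually (eventually_lt_nhds (show L < -(c ^ 2 / 2) by linarith))]
        with t ht hxt
      rw [neg_inj.1 hxt]
      linarith
    have hstay := eventually_le_of_frequently_lt_of_hasDerivAt_pos (hode.mono fun t ht => ht.neg)
      hdown (hbelow.mono fun t ht => neg_lt_neg ht)
    obtain ⟨t, hlt, hge⟩ := (habove.and_eventually hstay).exists
    linarith [show -c ≤ -x t from hge]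
  · have hup : ∀ᶠ t in atTop, x t = c → 0 < x t ^ 2 / 2 + h t := by
      filter_upwards [hlim.eventually (eventually_gt_nhds (show -(c ^ 2 / 2) < L by linarith))]
        with t ht hxt
      rw [hxt]
      linarith
    have hstay := eventually_le_of_frequently_lt_of_hasDerivAt_pos hode hup habove
    obtain ⟨t, hlt, hge⟩ := (hbelow.and_eventually hstay).exists
    linarith

theorem liminf_eq_limsup_of_riccati (hlim : Tendsto h atTop (𝓝 L))
    (hode : ∀ᶠ t in atTop, HasDerivAt x (x t ^ 2 / 2 + h t) t)
    (hle : IsBoundedUnder (· ≤ ·) atTop x) (hge : IsBoundedUnder (· ≥ ·) atTop x) :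
    liminf x atTop = limsup x atTop := by
  by_contra hne
  obtain ⟨c, ⟨hmc, hcM⟩, hc⟩ := exists_mem_Ioo_sq_ne
    (lt_of_le_of_ne (liminf_le_limsup hle hge) hne) (-2 * L)
  have hroot := sq_div_two_add_eq_zero_of_riccati_of_frequently hlim hode
    (frequently_lt_of_lt_limsup hge.isCoboundedUnder_le hcM)
    (frequently_lt_of_liminf_lt hle.isCoboundedUnder_ge hmc)
  exact hc (by linear_combination 2 * hroot)

end Riccati

theorem stmt17_general (h x : ℝ → ℝ) (L : ℝ)
    (hlim : Tendsto h atTop (nhds L))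
    (hode : ∀ t : ℝ, 0 ≤ t → HasDerivAt x ((x t) ^ 2 / 2 + h t) t)
    (hbdd : ∃ C : ℝ, ∀ t : ℝ, 0 ≤ t → |x t| ≤ C) :
    L ≤ 0 ∧ ∃ xinf : ℝ, Tendsto x atTop (nhds xinf) ∧ xinf ^ 2 / 2 + L = 0 := by
  have hode' : ∀ᶠ t in atTop, HasDerivAt x (x t ^ 2 / 2 + h t) t :=
    eventually_atTop.2 ⟨0, hode⟩
  obtain ⟨C, hC⟩ := hbdd
  have hC' : ∀ᶠ t in atTop, |x t| ≤ C := eventually_atTop.2 ⟨0, hC⟩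
  have hle : IsBoundedUnder (· ≤ ·) atTop x :=
    isBoundedUnder_of_eventually_le (hC'.mono fun t ht => (abs_le.1 ht).2)
  have hge : IsBoundedUnder (· ≥ ·) atTop x :=
    isBoundedUnder_of_eventually_ge (hC'.mono fun t ht => (abs_le.1 ht).1)
  have hx : Tendsto x atTop (𝓝 (limsup x atTop)) :=
    tendsto_of_liminf_eq_limsup (liminf_eq_limsup_of_riccati hlim hode' hle hge) rfl hle hge
  have hderiv := ((hx.pow 2).div_const 2).add hlim
  exact ⟨nonpos_of_riccati_of_isBoundedUnder hlim hode' hle, _, hx,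
    eq_zero_of_tendsto_hasDerivAt_of_isBoundedUnder hle hge hode' hderiv⟩

/-- for the scalar ODE `ẋ = x²/2 + h(t)` with `h` continuous on `[0,∞)` and
`h(t) → L ∈ ℝ`, if the trajectory of `x` is bounded then `L ≤ 0`, `x(t)` converges to a
real limit `x(∞)`, and `x(∞)²/2 + L = 0`. -/
theorem stmt17 (h x : ℝ → ℝ) (L : ℝ)
    (hcont : ContinuousOn h (Set.Ici (0 : ℝ)))
    (hlim : Tendsto h atTop (nhds L))
    (hode : ∀ t : ℝ, 0 ≤ t → HasDerivAt x ((x t) ^ 2 / 2 + h t) t)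
    (hbdd : ∃ C : ℝ, ∀ t : ℝ, 0 ≤ t → |x t| ≤ C) :
    L ≤ 0 ∧ ∃ xinf : ℝ, Tendsto x atTop (nhds xinf) ∧ xinf ^ 2 / 2 + L = 0 :=
  stmt17_general h x L hlim hode hbdd
end

section
/- Let a ∈ ℝ, let g : [0,∞) → ℝ be continuously differentiable with a finite limit g(∞) = lim_{t→∞} g(t), and let x : [0,∞) → ℝ be differentiable with ẋ(t) = (a e^{−t} − 1) x(t) + g(t) for all t ≥ 0. Then the limit x(∞) = lim_{t→∞} x(t) exists in ℝ and x(∞) = g(∞). -/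
/-!
`φ t = exp (t + a e^{-t})` is an integrating factor: `φ' = (1 - a e^{-t}) φ`, hence `(φ x)' = φ g`.
As `φ → ∞` and `(φ x)' / φ' = g / (1 - a e^{-t}) → G`, L'Hôpital's rule in its `∞/∞` form at `+∞`
gives `x = (φ x) / φ → G`.
-/

open Filter Topology Real

theorem abs_le_abs_add_sub_of_abs_deriv_le_deriv {f f' g g' : ℝ → ℝ} {T t : ℝ} (hTt : T ≤ t)
    (hf : ∀ s, T ≤ s → HasDerivAt f (f' s) s) (hg : ∀ s, T ≤ s → HasDerivAt g (g' s) s)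
    (hfg : ∀ s, T ≤ s → |f' s| ≤ g' s) :
    |f t| ≤ |f T| + (g t - g T) :=
  image_norm_le_of_norm_deriv_right_le_deriv_boundary' (a := T)
    (B := fun s => |f T| + (g s - g T)) (B' := g')
    (fun s hs => (hf s hs.1).continuousAt.continuousWithinAt)
    (fun s hs => (hf s hs.1).hasDerivWithinAt) (by simp)
    (fun s hs => ((hg s hs.1).continuousAt.continuousWithinAt.sub_const _).const_add _)
    (fun s hs => (((hg s hs.1).sub_const _).const_add _).hasDerivWithinAt)
    (fun s hs => hfg s hs.1) ⟨hTt, le_rfl⟩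

theorem lhopital_atTop_zero_of_denom_tendsto_atTop {f f' g g' : ℝ → ℝ}
    (hf : ∀ᶠ t in atTop, HasDerivAt f (f' t) t) (hg : ∀ᶠ t in atTop, HasDerivAt g (g' t) t)
    (hg' : ∀ᶠ t in atTop, 0 < g' t) (hgtop : Tendsto g atTop atTop)
    (hlim : Tendsto (fun t => f' t / g' t) atTop (𝓝 0)) :
    Tendsto (fun t => f t / g t) atTop (𝓝 0) := by
  rw [Metric.tendsto_nhds]
  intro ε hε
  have hsmall : ∀ᶠ t in atTop, |f' t| ≤ ε / 2 * g' t := by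
    filter_upwards [hg', Metric.tendsto_nhds.1 hlim (ε / 2) (half_pos hε)] with t hpos ht
    rw [dist_zero_right, norm_div, Real.norm_eq_abs, Real.norm_eq_abs, abs_of_pos hpos,
      div_lt_iff₀ hpos] at ht
    exact ht.le
  -- Past `T`, `|f t| ≤ C + ε / 2 * g t` for a constant `C`, and `C / g t → 0`.
  obtain ⟨T, hT⟩ := eventually_atTop.1 (hf.and (hg.and hsmall))
  have hbound (t : ℝ) (ht : T ≤ t) : |f t| ≤ |f T| + (ε / 2 * g t - ε / 2 * g T) :=
    abs_le_abs_add_sub_of_abs_deriv_le_deriv ht (fun s hs => (hT s hs).1)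
      (fun s hs => (hT s hs).2.1.const_mul _) (fun s hs => (hT s hs).2.2)
  have hC : Tendsto (fun t => (|f T| + ε / 2 * |g T|) / g t) atTop (𝓝 0) :=
    tendsto_const_nhds.div_atTop hgtop
  filter_upwards [eventually_ge_atTop T, hgtop.eventually_gt_atTop 0,
    hC.eventually (gt_mem_nhds (half_pos hε))] with t hTt hgt hCt
  rw [div_lt_iff₀ hgt] at hCt
  rw [dist_zero_right, norm_div, Real.norm_eq_abs, Real.norm_eq_abs, abs_of_pos hgt,
    div_lt_iff₀ hgt]
  nlinarith [hbound t hTt, neg_abs_le (g T)]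

theorem lhopital_atTop_of_denom_tendsto_atTop {f f' g g' : ℝ → ℝ} {L : ℝ}
    (hf : ∀ᶠ t in atTop, HasDerivAt f (f' t) t) (hg : ∀ᶠ t in atTop, HasDerivAt g (g' t) t)
    (hg' : ∀ᶠ t in atTop, 0 < g' t) (hgtop : Tendsto g atTop atTop)
    (hlim : Tendsto (fun t => f' t / g' t) atTop (𝓝 L)) :
    Tendsto (fun t => f t / g t) atTop (𝓝 L) := by
  have hsub : Tendsto (fun t => (f t - L * g t) / g t) atTop (𝓝 0) := by
    refine lhopital_atTop_zero_of_denom_tendsto_atTop (f' := fun t => f' t - L * g' t)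
      (hf.and hg |>.mono fun t h => h.1.sub (h.2.const_mul L)) hg hg' hgtop ?_
    refine (sub_self L ▸ hlim.sub_const L).congr' ?_
    filter_upwards [hg'] with t ht
    field_simp
  refine (zero_add L ▸ hsub.add_const L).congr' ?_
  filter_upwards [hgtop.eventually_gt_atTop 0] with t ht
  field_simp
  ring

theorem hasDerivAt_exp_add_mul_exp_neg (a t : ℝ) :
    HasDerivAt (fun t => exp (t + a * exp (-t)))
      (exp (t + a * exp (-t)) * (1 - a * exp (-t))) t := by
  have h : HasDerivAt (fun t => t + a * exp (-t)) (1 + a * (exp (-t) * -1)) t :=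
    (hasDerivAt_id' t).add ((hasDerivAt_neg t).exp.const_mul a)
  convert h.exp using 1
  ring

theorem tendsto_one_sub_mul_exp_neg_atTop (a : ℝ) :
    Tendsto (fun t => 1 - a * exp (-t)) atTop (𝓝 1) := by
  simpa using (tendsto_const_nhds (x := (1 : ℝ))).sub
    ((tendsto_exp_atBot.comp tendsto_neg_atTop_atBot).const_mul a)

theorem tendsto_exp_add_mul_exp_neg_atTop (a : ℝ) :
    Tendsto (fun t => exp (t + a * exp (-t))) atTop atTop := by
  refine tendsto_exp_atTop.comp (tendsto_id.atTop_add (C := 0) ?_)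
  simpa using (tendsto_exp_atBot.comp tendsto_neg_atTop_atBot).const_mul a

theorem stmt18_general (a : ℝ) (g x : ℝ → ℝ) (G : ℝ)
    (hlim : Tendsto g atTop (nhds G))
    (hode : ∀ t : ℝ, 0 ≤ t → HasDerivAt x ((a * Real.exp (-t) - 1) * x t + g t) t) :
    Tendsto x atTop (nhds G) := by
  set φ : ℝ → ℝ := fun t => exp (t + a * exp (-t))
  have hφpos (t : ℝ) : 0 < φ t := exp_pos _
  have hW : ∀ᶠ t in atTop, HasDerivAt (fun t => φ t * x t) (φ t * g t) t := by
    filter_upwards [eventually_ge_atTop 0] with t ht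
    exact ((hasDerivAt_exp_add_mul_exp_neg a t).mul (hode t ht)).congr_deriv (by ring)
  have hφ' : ∀ᶠ t in atTop, 0 < φ t * (1 - a * exp (-t)) :=
    (tendsto_one_sub_mul_exp_neg_atTop a).eventually (lt_mem_nhds one_pos) |>.mono
      fun t ht => mul_pos (hφpos t) ht
  have hratio : Tendsto (fun t => φ t * g t / (φ t * (1 - a * exp (-t)))) atTop (𝓝 G) := by
    refine (div_one G ▸ hlim.div (tendsto_one_sub_mul_exp_neg_atTop a) one_ne_zero).congr
      fun t => ?_
    rw [mul_div_mul_left _ _ (hφpos t).ne', Pi.div_apply]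
  refine (lhopital_atTop_of_denom_tendsto_atTop hW
    (.of_forall (hasDerivAt_exp_add_mul_exp_neg a)) hφ'
    (tendsto_exp_add_mul_exp_neg_atTop a) hratio).congr fun t => ?_
  exact mul_div_cancel_left₀ _ (hφpos t).ne'

/-- for the scalar linear ODE `ẋ = (a e^{−t} − 1) x + g(t)` with `g`
continuously differentiable on `[0,∞)` and `g(t) → G ∈ ℝ`, the solution converges and
`x(∞) = G`. -/
theorem stmt18 (a : ℝ) (g x : ℝ → ℝ) (G : ℝ)
    (hg : ContDiffOn ℝ 1 g (Set.Ici (0 : ℝ)))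
    (hlim : Tendsto g atTop (nhds G))
    (hode : ∀ t : ℝ, 0 ≤ t → HasDerivAt x ((a * Real.exp (-t) - 1) * x t + g t) t) :
    Tendsto x atTop (nhds G) :=
  stmt18_general a g x G hlim hode
end

section
/- Let δ ∈ (0,1), let I ⊆ {1,…,m}, and let M ∈ ℝ^{m×m} be a nonsingular M-matrix, i.e., M_{ij} ≤ 0 for all i ≠ j and every real eigenvalue of M is strictly positive. Let x and y be solutions of the system ż = (1/2) z_I^{(2)} − M z, where z_I^{(2)} denotes the vector whose i-th entry is z_i² 1_{i∈I}, with x(0) = δ y(0). Then x(t) ≤ δ y(t) componentwise for every t ≥ 0 at which both solutions exist. -/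
open Filter Topology

private lemma stmt19_deriv_nonpos_of_min_left {f : ℝ → ℝ} {d b : ℝ} (hb : 0 < b)
    (hf : HasDerivAt f d b) (hmin : ∀ s, 0 < s → s < b → f b ≤ f s) : d ≤ 0 := by
  have h := hasDerivAt_iff_tendsto_slope.1 hf
  have h2 : Tendsto (slope f b) (𝓝[<] b) (𝓝 d) :=
    h.mono_left (nhdsWithin_mono _ (fun s hs => ne_of_lt hs))
  refine le_of_tendsto h2 ?_
  filter_upwards [Ioo_mem_nhdsLT_of_mem (⟨hb, le_refl b⟩ : b ∈ Set.Ioc 0 b)] with s hs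
  rw [slope_def_field]
  exact div_nonpos_of_nonneg_of_nonpos (sub_nonneg.2 (hmin s hs.1 hs.2)) (by linarith [hs.2])

set_option maxHeartbeats 1600000 in
/-- comparison for `ż = (1/2) z_I^{(2)} − M z` with `M` a nonsingular
M-matrix: if `x(0) = δ y(0)` with `δ ∈ (0,1)`, then `x(t) ≤ δ y(t)` componentwise for
every `t ≥ 0` at which both solutions exist. -/
theorem stmt19 (m : ℕ) (hm : 1 ≤ m) (I : Finset (Fin m))
    (δ : ℝ) (hδ0 : 0 < δ) (hδ1 : δ < 1)
    (M : Matrix (Fin m) (Fin m) ℝ)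
    (hoff : ∀ i j : Fin m, i ≠ j → M i j ≤ 0)
    (heig : ∀ μ ∈ spectrum ℝ M, 0 < μ)
    (x y : ℝ → Fin m → ℝ)
    (hxy0 : x 0 = δ • y 0) :
    ∀ t : ℝ, 0 ≤ t →
      (∀ s ∈ Set.Icc (0 : ℝ) t, HasDerivAt x
        (fun i => (1 / 2) * (x s i) ^ 2 * (if i ∈ I then 1 else 0) - M.mulVec (x s) i) s) →
      (∀ s ∈ Set.Icc (0 : ℝ) t, HasDerivAt y
        (fun i => (1 / 2) * (y s i) ^ 2 * (if i ∈ I then 1 else 0) - M.mulVec (y s) i) s) →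
      ∀ i : Fin m, x t i ≤ δ * y t i := by
  intro t₀ ht₀ hx hy
  haveI : Nonempty (Fin m) := ⟨⟨0, hm⟩⟩
  have hne : (Finset.univ : Finset (Fin m)).Nonempty := Finset.univ_nonempty
  have hxc : ∀ s ∈ Set.Icc (0:ℝ) t₀, ContinuousAt x s := fun s hs => (hx s hs).continuousAt
  have hyc : ∀ s ∈ Set.Icc (0:ℝ) t₀, ContinuousAt y s := fun s hs => (hy s hs).continuousAt
  -- bound on y
  obtain ⟨C, hC⟩ := (isCompact_Icc (a := (0:ℝ)) (b := t₀)).exists_bound_of_continuousOn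
      (fun s hs => (hyc s hs).continuousWithinAt)
  set K : ℝ := max C 0 with hKdef
  have hK0 : 0 ≤ K := le_max_right _ _
  have hK : ∀ s ∈ Set.Icc (0:ℝ) t₀, ∀ i, |y s i| ≤ K := by
    intro s hs i
    calc |y s i| = ‖y s i‖ := rfl
      _ ≤ ‖y s‖ := norm_le_pi_norm (y s) i
      _ ≤ C := hC s hs
      _ ≤ K := le_max_left _ _
  set R : ℝ := ∑ i : Fin m, ∑ j : Fin m, |M i j| with hRdef
  have hR0 : 0 ≤ R := Finset.sum_nonneg fun i _ => Finset.sum_nonneg fun j _ => abs_nonneg _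
  have hRrow : ∀ i : Fin m, ∑ j : Fin m, |M i j| ≤ R := fun i =>
    Finset.single_le_sum (f := fun i => ∑ j : Fin m, |M i j|)
      (fun k _ => Finset.sum_nonneg fun j _ => abs_nonneg _) (Finset.mem_univ i)
  set c : ℝ := δ * K + R + 1 with hcdef
  have hc0 : 0 < c := by positivity
  -- continuity of the comparison functions
  have hvc : ∀ (ε : ℝ) (j : Fin m), ∀ s ∈ Set.Icc (0:ℝ) t₀,
      ContinuousAt (fun r => δ * y r j - x r j + ε * Real.exp (c * r)) s := by
    intro ε j s hs
    have h1 : ContinuousAt (fun r => y r j) s := (continuous_apply j).continuousAt.comp (hyc s hs)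
    have h2 : ContinuousAt (fun r => x r j) s := (continuous_apply j).continuousAt.comp (hxc s hs)
    exact ((h1.const_mul δ).sub h2).add
      (((Real.continuous_exp.comp (continuous_const.mul continuous_id)).continuousAt).const_mul ε)
  -- main claim
  have key : ∀ ε : ℝ, 0 < ε → ε * Real.exp (c * t₀) ≤ 1 →
      ∀ s ∈ Set.Icc (0:ℝ) t₀, ∀ i, 0 < δ * y s i - x s i + ε * Real.exp (c * s) := by
    intro ε hε hε1
    by_contra hcon
    push_neg at hcon
    set w : ℝ → ℝ := fun s => Finset.univ.inf' hne
      (fun j => δ * y s j - x s j + ε * Real.exp (c * s)) with hwdef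
    have hwc : ∀ s ∈ Set.Icc (0:ℝ) t₀, ContinuousAt w s := by
      intro s hs
      exact ContinuousAt.finset_inf'_apply hne (fun j _ => hvc ε j s hs)
    have hwle : ∀ s, ∀ j : Fin m, w s ≤ δ * y s j - x s j + ε * Real.exp (c * s) :=
      fun s j => Finset.inf'_le _ (Finset.mem_univ j)
    obtain ⟨s₁, hs₁Icc, i₁, hi₁⟩ := hcon
    set A : Set ℝ := {s | s ∈ Set.Icc (0:ℝ) t₀ ∧ w s ≤ 0} with hAdef
    have hA_ne : A.Nonempty := ⟨s₁, hs₁Icc, le_trans (hwle s₁ i₁) hi₁⟩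
    have hAbdd : BddBelow A := ⟨0, fun a ha => ha.1.1⟩
    set b : ℝ := sInf A with hbdef
    have hbcl : b ∈ closure A := csInf_mem_closure hA_ne hAbdd
    have hbIcc : b ∈ Set.Icc (0:ℝ) t₀ :=
      (closure_minimal (fun a (ha : a ∈ A) => ha.1) isClosed_Icc) hbcl
    have hwb : w b ≤ 0 := by
      have hnb : (𝓝[A] b).NeBot := mem_closure_iff_nhdsWithin_neBot.1 hbcl
      refine le_of_tendsto ((hwc b hbIcc).continuousWithinAt (s := A)) ?_
      filter_upwards [self_mem_nhdsWithin] with a ha using ha.2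
    have hw0 : w 0 = ε := by
      have hx0 : ∀ j, x 0 j = δ * y 0 j := fun j => by rw [hxy0]; rfl
      have hv0 : (fun j : Fin m => δ * y 0 j - x 0 j + ε * Real.exp (c * 0))
          = fun _ : Fin m => ε := by
        funext j; rw [hx0 j]; simp
      rw [hwdef]; simp only [hv0, Finset.inf'_const]
    have hb0 : 0 < b := by
      rcases hbIcc.1.lt_or_eq with h | h
      · exact h
      · exfalso; rw [← h] at hwb; rw [hw0] at hwb; linarith
    have hmin : ∀ r, 0 ≤ r → r < b → 0 < w r := by
      intro r hr0 hrb
      by_contra h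
      push_neg at h
      exact absurd (csInf_le hAbdd ⟨⟨hr0, le_trans hrb.le hbIcc.2⟩, h⟩) (not_le.2 hrb)
    have hvb : ∀ j : Fin m, 0 ≤ δ * y b j - x b j + ε * Real.exp (c * b) := by
      intro j
      have hcl : b ∈ closure (Set.Ico 0 b) := by
        rw [closure_Ico (ne_of_lt hb0)]
        exact ⟨hb0.le, le_refl b⟩
      have hnb : (𝓝[Set.Ico 0 b] b).NeBot := mem_closure_iff_nhdsWithin_neBot.1 hcl
      refine ge_of_tendsto ((hvc ε j b hbIcc).continuousWithinAt (s := Set.Ico 0 b)) ?_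
      filter_upwards [self_mem_nhdsWithin] with r hr
      exact le_of_lt (lt_of_lt_of_le (hmin r hr.1 hr.2) (hwle r j))
    obtain ⟨i, _, hieq⟩ := Finset.exists_mem_eq_inf' hne
      (fun j => δ * y b j - x b j + ε * Real.exp (c * b))
    have hvib : δ * y b i - x b i + ε * Real.exp (c * b) = 0 := by
      have h1 : δ * y b i - x b i + ε * Real.exp (c * b) ≤ 0 := by
        have h2 : Finset.univ.inf' hne
            (fun j => δ * y b j - x b j + ε * Real.exp (c * b)) ≤ 0 := hwb
        rw [hieq] at h2
        exact h2
      exact le_antisymm h1 (hvb i)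
    -- derivative of the i-th comparison function at b
    have hyi : HasDerivAt (fun s => y s i)
        ((1 / 2) * (y b i) ^ 2 * (if i ∈ I then 1 else 0) - M.mulVec (y b) i) b :=
      hasDerivAt_pi.1 (hy b hbIcc) i
    have hxi : HasDerivAt (fun s => x s i)
        ((1 / 2) * (x b i) ^ 2 * (if i ∈ I then 1 else 0) - M.mulVec (x b) i) b :=
      hasDerivAt_pi.1 (hx b hbIcc) i
    have hexp : HasDerivAt (fun s : ℝ => ε * Real.exp (c * s))
        (ε * (Real.exp (c * b) * c)) b := by
      have h1 : HasDerivAt (fun s : ℝ => c * s) c b := by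
        simpa using (hasDerivAt_id b).const_mul c
      exact ((Real.hasDerivAt_exp (c * b)).comp b h1).const_mul ε
    have hvd : HasDerivAt (fun s => δ * y s i - x s i + ε * Real.exp (c * s))
        (δ * ((1 / 2) * (y b i) ^ 2 * (if i ∈ I then 1 else 0) - M.mulVec (y b) i)
          - ((1 / 2) * (x b i) ^ 2 * (if i ∈ I then 1 else 0) - M.mulVec (x b) i)
          + ε * (Real.exp (c * b) * c)) b :=
      ((hyi.const_mul δ).sub hxi).add hexp
    have hd0 : δ * ((1 / 2) * (y b i) ^ 2 * (if i ∈ I then 1 else 0) - M.mulVec (y b) i)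
          - ((1 / 2) * (x b i) ^ 2 * (if i ∈ I then 1 else 0) - M.mulVec (x b) i)
          + ε * (Real.exp (c * b) * c) ≤ 0 := by
      refine stmt19_deriv_nonpos_of_min_left hb0 hvd ?_
      intro s hs1 hs2
      rw [hvib]
      exact le_of_lt (lt_of_lt_of_le (hmin s hs1.le hs2) (hwle s i))
    -- now derive a contradiction: the derivative is in fact positive
    set e : ℝ := Real.exp (c * b) with hedef
    have he0 : 0 < e := Real.exp_pos _
    have heE : ε * e ≤ 1 := by
      have h1 : e ≤ Real.exp (c * t₀) := Real.exp_le_exp.2 (by nlinarith [hbIcc.2, hc0])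
      nlinarith [Real.exp_pos (c * t₀)]
    have hu0 : 0 < ε * e := mul_pos hε he0
    have hxi_eq : x b i = δ * y b i + ε * e := by linarith [hvib]
    have hzj : ∀ j, x b j - δ * y b j ≤ ε * e := fun j => by linarith [hvb j]
    -- the sum bound
    have hMx : M.mulVec (x b) i - δ * M.mulVec (y b) i
        = ∑ j : Fin m, M i j * (x b j - δ * y b j) := by
      simp only [Matrix.mulVec, dotProduct]
      rw [Finset.mul_sum, ← Finset.sum_sub_distrib]
      congr 1; funext j; ring
    have hS : -(R * (ε * e)) ≤ ∑ j : Fin m, M i j * (x b j - δ * y b j) := by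
      have h1 : ∀ j ∈ (Finset.univ : Finset (Fin m)),
          -(|M i j| * (ε * e)) ≤ M i j * (x b j - δ * y b j) := by
        intro j _
        rcases eq_or_ne j i with rfl | hji
        · have h2 : x b j - δ * y b j = ε * e := by rw [hxi_eq]; ring
          rw [h2]
          nlinarith [neg_abs_le (M j j), hu0]
        · have hM := hoff i j (Ne.symm hji)
          have habs : |M i j| = -(M i j) := abs_of_nonpos hM
          nlinarith [mul_le_mul_of_nonpos_left (hzj j) hM]
      calc -(R * (ε * e)) ≤ -((∑ j : Fin m, |M i j|) * (ε * e)) :=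
            neg_le_neg (mul_le_mul_of_nonneg_right (hRrow i) hu0.le)
        _ = ∑ j : Fin m, -(|M i j| * (ε * e)) := by
            rw [Finset.sum_mul, ← Finset.sum_neg_distrib]
        _ ≤ _ := Finset.sum_le_sum h1
    -- the quadratic bound
    have hyK : |y b i| ≤ K := hK b hbIcc i
    have hχ : (if i ∈ I then (1:ℝ) else 0) = 0 ∨ (if i ∈ I then (1:ℝ) else 0) = 1 := by
      by_cases h : i ∈ I <;> simp [h]
    have hquad : -(δ * K * (ε * e)) - (ε * e) * (ε * e) / 2
        ≤ (1 / 2) * (δ * (y b i) ^ 2 - (x b i) ^ 2) * (if i ∈ I then (1:ℝ) else 0) := by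
      rcases hχ with h | h <;> rw [h]
      · nlinarith [hu0, mul_nonneg (mul_nonneg hδ0.le hK0) hu0.le]
      · rw [hxi_eq]
        nlinarith [mul_nonneg (mul_nonneg hδ0.le (by linarith : (0:ℝ) ≤ 1 - δ)) (sq_nonneg (y b i)),
          mul_nonneg (mul_nonneg hδ0.le hu0.le) (sub_nonneg.2 (abs_le.1 hyK).2)]
    have hcu : ε * (e * c) = δ * K * (ε * e) + R * (ε * e) + ε * e := by
      rw [hcdef]; ring
    have hu2 : (ε * e) * (ε * e) ≤ ε * e := by nlinarith [hu0, heE]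
    have hd1 : 0 < δ * ((1 / 2) * (y b i) ^ 2 * (if i ∈ I then 1 else 0) - M.mulVec (y b) i)
          - ((1 / 2) * (x b i) ^ 2 * (if i ∈ I then 1 else 0) - M.mulVec (x b) i)
          + ε * (e * c) := by
      have hexpand : δ * ((1 / 2) * (y b i) ^ 2 * (if i ∈ I then 1 else 0) - M.mulVec (y b) i)
          - ((1 / 2) * (x b i) ^ 2 * (if i ∈ I then 1 else 0) - M.mulVec (x b) i)
          + ε * (e * c)
          = (1 / 2) * (δ * (y b i) ^ 2 - (x b i) ^ 2) * (if i ∈ I then (1:ℝ) else 0)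
            + (M.mulVec (x b) i - δ * M.mulVec (y b) i) + ε * (e * c) := by ring
      rw [hexpand, hMx]
      linarith [hquad, hS, hcu, hu2, hu0]
    linarith [hd0, hd1]
  -- conclude
  intro i
  by_contra hcb
  push_neg at hcb
  set E : ℝ := Real.exp (c * t₀) with hEdef
  have hE : 0 < E := Real.exp_pos _
  set a : ℝ := x t₀ i - δ * y t₀ i with hadef
  have ha : 0 < a := by rw [hadef]; linarith
  set ε : ℝ := min (1 / E) (a / (2 * E)) with hεdef
  have hε : 0 < ε := lt_min (by positivity) (by positivity)
  have h1 : ε * E ≤ 1 := by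
    calc ε * E ≤ (1 / E) * E := mul_le_mul_of_nonneg_right (min_le_left _ _) hE.le
      _ = 1 := by field_simp
  have h2 := key ε hε h1 t₀ ⟨ht₀, le_refl t₀⟩ i
  have h3 : ε * E ≤ a / 2 := by
    calc ε * E ≤ (a / (2 * E)) * E := mul_le_mul_of_nonneg_right (min_le_right _ _) hE.le
      _ = a / 2 := by field_simp
  rw [hadef] at h3
  linarith [h2]
end
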